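/- arXiv:math/0012105 — 11 statements merged into one kernel-verified Lean document; each statement's English description precedes it below -/
import Mathlib

section
/- Let A be a C*-algebra, let E be a right Hilbert C*-module over A, and let Y ⊆ E be a closed A-submodule. If P, Q : E → E are linear maps with P∘P = P, Q∘Q = Q, ‖P(x)‖ ≤ ‖x‖ and ‖Q(x)‖ ≤ ‖x‖ for all x ∈ E, and range P = range Q = Y, then P = Q. In other words, there is at most one contractive linear projection from a Hilbert C*-module onto a closed submodule. -/
/-!
If `P` is a contractive idempotent with range `Y`, then `u = x - P x` satisfies
`‖y‖ = ‖P (y + u)‖ ≤ ‖y + u‖` for all `y ∈ Y`. Such a `u` is orthogonal to `Y`: for `y ∈ Y` put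
`c = ⟪y, u⟫` and `w = y • c ∈ Y`. Then `⟪w, u⟫ = c⋆c ≥ 0` and `⟪w, w⟫ = c⋆⟪y, y⟫c ≤ M • c⋆c`
with `M = ‖⟪y, y⟫‖ + 1`. For large real `t` this gives
`‖t w‖² ≤ ‖u - t w‖² = ‖t² ⟪w, w⟫ - 2t ⟪w, u⟫ + ⟪u, u⟫‖ ≤ ‖t w‖² - (2t / M) ‖⟪w, w⟫‖ + ‖⟪u, u⟫‖`,
hence `w = 0` and `c⋆c = ⟪w, u⟫ = 0`.
Finally `P x - Q x = (x - Q x) - (x - P x)` lies in `Y` and is orthogonal to `Y`.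
-/

open scoped RightActions

/-- The December 2024 Mathlib definition of `CStarModule` (right Hilbert C⋆-module, with the
right action given by `SMul Aᵐᵒᵖ E`), kept verbatim because Mathlib's `CStarModule` is now a
left module. -/
class CStarModuleOld (A E : Type*) [NonUnitalSemiring A] [StarRing A] [Module ℂ A]
    [AddCommGroup E] [Module ℂ E] [PartialOrder A] [SMul Aᵐᵒᵖ E] [Norm A] [Norm E]
    extends Inner A E where
  inner_add_right {x} {y} {z} : inner x (y + z) = inner x y + inner x z
  inner_self_nonneg {x} : 0 ≤ inner x x
  inner_self {x} : inner x x = 0 ↔ x = 0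
  inner_op_smul_right {a : A} {x y : E} : inner x (y <• a) = inner x y * a
  inner_smul_right_complex {z : ℂ} {x} {y} : inner x (z • y) = z • inner x y
  star_inner x y : star (inner x y) = inner y x
  norm_eq_sqrt_norm_inner_self x : ‖x‖ = √‖inner x x‖


lemma le_zero_of_forall_mul_le {a b c : ℝ} (h : ∀ t, c ≤ t → t * a ≤ b) : a ≤ 0 := by
  by_contra! ha
  set t := max c ((b + 1) / a)
  have ht : (b + 1) / a * a ≤ t * a := mul_le_mul_of_nonneg_right (le_max_right _ _) ha.le
  rw [div_mul_cancel₀ _ ha.ne'] at ht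
  linarith [h t (le_max_left _ _)]

lemma CStarAlgebra.eq_zero_of_sq_mul_norm_le_norm_quadratic {A : Type*} [NonUnitalCStarAlgebra A]
    [PartialOrder A] [StarOrderedRing A] {α β δ : A} {M : ℝ} (hM : 0 < M) (hαβ : α ≤ M • β)
    (h : ∀ t : ℝ, 0 < t →
      0 ≤ t ^ 2 • α - (2 * t) • β + δ ∧ t ^ 2 * ‖α‖ ≤ ‖t ^ 2 • α - (2 * t) • β + δ‖) :
    α = 0 := by
  suffices ∀ t, 2 / M ≤ t → t * (2 / M * ‖α‖) ≤ ‖δ‖ by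
    have := (le_zero_of_forall_mul_le this).trans_eq (mul_zero (2 / M)).symm
    exact norm_le_zero_iff.mp (le_of_mul_le_mul_left this (by positivity))
  intro t ht
  have htpos : 0 < t := (div_pos two_pos hM).trans_le ht
  have hs : 0 ≤ t ^ 2 - 2 * t / M := by
    rw [div_le_iff₀ hM] at ht
    rw [sub_nonneg, div_le_iff₀ hM]
    nlinarith
  obtain ⟨hX, hnorm⟩ := h t htpos
  have hle : t ^ 2 • α - (2 * t) • β + δ ≤ (t ^ 2 - 2 * t / M) • α + δ := by
    have : (2 * t / M) • α ≤ (2 * t) • β := by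
      calc (2 * t / M) • α ≤ (2 * t / M) • (M • β) :=
            smul_le_smul_of_nonneg_left hαβ (by positivity)
        _ = (2 * t) • β := by rw [smul_smul, div_mul_cancel₀ _ hM.ne']
    rw [sub_smul]
    gcongr
  calc t * (2 / M * ‖α‖) = t ^ 2 * ‖α‖ - (t ^ 2 - 2 * t / M) * ‖α‖ := by ring
    _ ≤ ‖(t ^ 2 - 2 * t / M) • α + δ‖ - (t ^ 2 - 2 * t / M) * ‖α‖ := by
        gcongr
        exact hnorm.trans (CStarAlgebra.norm_le_norm_of_nonneg_of_le hX hle)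
    _ ≤ ‖δ‖ := by
        have := norm_add_le ((t ^ 2 - 2 * t / M) • α) δ
        rw [norm_smul, Real.norm_of_nonneg hs] at this
        linarith

namespace CStarModuleOld

variable {A E : Type*} [NonUnitalCStarAlgebra A] [PartialOrder A]
  [NormedAddCommGroup E] [Module ℂ E] [SMul Aᵐᵒᵖ E] [CStarModuleOld A E]

local notation "⟪" x ", " y "⟫" => inner A x y

lemma inner_smul_left_complex {z : ℂ} {x y : E} : ⟪z • x, y⟫ = star z • ⟪x, y⟫ := by
  rw [← star_inner y, inner_smul_right_complex, star_smul, star_inner]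

lemma inner_sub_right {x y z : E} : ⟪x, y - z⟫ = ⟪x, y⟫ - ⟪x, z⟫ := by
  rw [sub_eq_add_neg, ← neg_one_smul ℂ z, inner_add_right, inner_smul_right_complex, neg_one_smul,
    sub_eq_add_neg]

lemma inner_sub_left {x y z : E} : ⟪x - y, z⟫ = ⟪x, z⟫ - ⟪y, z⟫ := by
  rw [← star_inner z, inner_sub_right, star_sub, star_inner, star_inner]

lemma inner_op_smul_left {a : A} {x y : E} : ⟪x <• a, y⟫ = star a * ⟪x, y⟫ := by
  rw [← star_inner y, inner_op_smul_right, star_mul, star_inner]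

lemma inner_zero_left {x : E} : ⟪0, x⟫ = 0 := by
  rw [← zero_smul ℂ (0 : E), inner_smul_left_complex, star_zero, zero_smul]

lemma norm_sq_eq_norm_inner_self (x : E) : ‖x‖ ^ 2 = ‖⟪x, x⟫‖ := by
  rw [norm_eq_sqrt_norm_inner_self (A := A) x, Real.sq_sqrt (norm_nonneg _)]

lemma inner_self_sub_real_smul {u w : E} (hwu : IsSelfAdjoint ⟪w, u⟫) (t : ℝ) :
    ⟪u - (t : ℂ) • w, u - (t : ℂ) • w⟫ = t ^ 2 • ⟪w, w⟫ - (2 * t) • ⟪w, u⟫ + ⟪u, u⟫ := by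
  have huw : ⟪u, w⟫ = ⟪w, u⟫ := (star_inner w u).symm.trans hwu
  rw [inner_sub_left, inner_sub_right, inner_sub_right, inner_smul_left_complex,
    inner_smul_left_complex, inner_smul_right_complex, inner_smul_right_complex, huw]
  simp only [Complex.star_def, Complex.conj_ofReal, Complex.coe_smul, smul_smul]
  module

variable [StarOrderedRing A]

lemma eq_zero_of_forall_norm_smul_le_norm_sub {u w : E} {M : ℝ} (hM : 0 < M)
    (hwu : 0 ≤ ⟪w, u⟫) (hww : ⟪w, w⟫ ≤ M • ⟪w, u⟫)
    (h : ∀ t : ℝ, 0 < t → ‖(t : ℂ) • w‖ ≤ ‖u - (t : ℂ) • w‖) : w = 0 := by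
  refine inner_self.mp <|
    CStarAlgebra.eq_zero_of_sq_mul_norm_le_norm_quadratic (δ := ⟪u, u⟫) hM hww fun t ht => ?_
  rw [← inner_self_sub_real_smul (IsSelfAdjoint.of_nonneg hwu)]
  refine ⟨inner_self_nonneg, ?_⟩
  have := pow_le_pow_left₀ (norm_nonneg _) (h t ht) 2
  rwa [norm_sq_eq_norm_inner_self (A := A), norm_sq_eq_norm_inner_self (A := A),
    inner_smul_left_complex, inner_smul_right_complex, smul_smul, Complex.star_def,
    Complex.conj_ofReal, ← Complex.ofReal_mul, Complex.coe_smul, norm_smul, ← sq,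
    Real.norm_of_nonneg (sq_nonneg t)] at this

lemma inner_eq_zero_of_forall_norm_le_norm_add (Y : Submodule ℂ E)
    (hYmod : ∀ y ∈ Y, ∀ a : A, y <• a ∈ Y) {u : E} (hu : ∀ y ∈ Y, ‖y‖ ≤ ‖y + u‖) {y : E}
    (hy : y ∈ Y) : ⟪y, u⟫ = 0 := by
  set c := ⟪y, u⟫
  have hw : y <• c = 0 := by
    refine eq_zero_of_forall_norm_smul_le_norm_sub (A := A) (u := u) (M := ‖⟪y, y⟫‖ + 1)
      (by positivity) ?_ ?_ fun t _ => ?_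
    · rw [inner_op_smul_left]
      exact star_mul_self_nonneg c
    · rw [inner_op_smul_left, inner_op_smul_left, inner_op_smul_right, ← mul_assoc]
      calc star c * ⟪y, y⟫ * c ≤ ‖⟪y, y⟫‖ • (star c * c) :=
            CStarAlgebra.star_left_conjugate_le_norm_smul (star_inner y y)
        _ ≤ (‖⟪y, y⟫‖ + 1) • (star c * c) := by
            gcongr
            · exact star_mul_self_nonneg c
            · linarith
    · have := hu _ (Y.neg_mem (Y.smul_mem (t : ℂ) (hYmod y hy c)))
      rwa [norm_neg, neg_add_eq_sub] at this
  have : star c * c = 0 := by rw [← inner_op_smul_left, hw, inner_zero_left]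
  exact (CStarRing.star_mul_self_eq_zero_iff c).mp this

end CStarModuleOld

lemma norm_le_norm_add_sub_apply_of_idempotent {R M : Type*} [Ring R] [SeminormedAddCommGroup M]
    [Module R M] {P : M →ₗ[R] M} (hP2 : ∀ x, P (P x) = P x) (hPc : ∀ x, ‖P x‖ ≤ ‖x‖) (x : M)
    {y : M} (hy : y ∈ Set.range P) : ‖y‖ ≤ ‖y + (x - P x)‖ := by
  obtain ⟨z, rfl⟩ := hy
  calc ‖P z‖ = ‖P (P z + (x - P x))‖ := by rw [map_add, map_sub, hP2, hP2, sub_self, add_zero]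
    _ ≤ ‖P z + (x - P x)‖ := hPc _

theorem stmt_3_general {A E : Type*} [NonUnitalCStarAlgebra A] [PartialOrder A] [StarOrderedRing A]
    [NormedAddCommGroup E] [Module ℂ E] [SMul Aᵐᵒᵖ E] [CStarModuleOld A E]
    (Y : Submodule ℂ E) (hYmod : ∀ y ∈ Y, ∀ a : A, y <• a ∈ Y)
    (P Q : E →ₗ[ℂ] E)
    (hP2 : ∀ x, P (P x) = P x) (hQ2 : ∀ x, Q (Q x) = Q x)
    (hPc : ∀ x, ‖P x‖ ≤ ‖x‖) (hQc : ∀ x, ‖Q x‖ ≤ ‖x‖)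
    (hPr : Set.range P = (Y : Set E)) (hQr : Set.range Q = (Y : Set E)) :
    P = Q := by
  ext x
  have hPQ : P x - Q x ∈ Y := by
    refine Y.sub_mem ?_ ?_
    · exact (hPr ▸ Set.mem_range_self x : P x ∈ (Y : Set E))
    · exact (hQr ▸ Set.mem_range_self x : Q x ∈ (Y : Set E))
  have hP : inner A (P x - Q x) (x - P x) = 0 :=
    CStarModuleOld.inner_eq_zero_of_forall_norm_le_norm_add Y hYmod
      (fun y hy => norm_le_norm_add_sub_apply_of_idempotent hP2 hPc x (hPr ▸ hy)) hPQ
  have hQ : inner A (P x - Q x) (x - Q x) = 0 :=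
    CStarModuleOld.inner_eq_zero_of_forall_norm_le_norm_add Y hYmod
      (fun y hy => norm_le_norm_add_sub_apply_of_idempotent hQ2 hQc x (hQr ▸ hy)) hPQ
  have : inner A (P x - Q x) (P x - Q x) = 0 :=
    calc inner A (P x - Q x) (P x - Q x) = inner A (P x - Q x) ((x - Q x) - (x - P x)) := by
          congr 1; abel
      _ = 0 := by rw [CStarModuleOld.inner_sub_right, hP, hQ, sub_zero]
  exact sub_eq_zero.mp (CStarModuleOld.inner_self.mp this)

/-- Let `E` be a right Hilbert C*-module over a C*-algebra `A` and `Y ⊆ E` a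
closed `A`-submodule.  If `P, Q : E → E` are contractive linear idempotents with
`range P = range Q = Y`, then `P = Q`: there is at most one contractive linear projection from a
Hilbert C*-module onto a closed submodule. -/
theorem stmt_3 {A E : Type*} [NonUnitalCStarAlgebra A] [PartialOrder A] [StarOrderedRing A]
    [NormedAddCommGroup E] [Module ℂ E] [SMul Aᵐᵒᵖ E] [CStarModuleOld A E] [CompleteSpace E]
    (Y : Submodule ℂ E) (hYclosed : IsClosed (Y : Set E))
    (hYmod : ∀ y ∈ Y, ∀ a : A, y <• a ∈ Y)
    (P Q : E →ₗ[ℂ] E)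
    (hP2 : ∀ x, P (P x) = P x) (hQ2 : ∀ x, Q (Q x) = Q x)
    (hPc : ∀ x, ‖P x‖ ≤ ‖x‖) (hQc : ∀ x, ‖Q x‖ ≤ ‖x‖)
    (hPr : Set.range P = (Y : Set E)) (hQr : Set.range Q = (Y : Set E)) :
    P = Q :=
  stmt_3_general Y hYmod P Q hP2 hQ2 hPc hQc hPr hQr
end

section
/- Let A be a C*-algebra, let E be a right Hilbert C*-module over A, and let Y ⊆ E be a closed A-submodule. If P : E → E is a linear map with P∘P = P, ‖P(x)‖ ≤ ‖x‖ for all x ∈ E, and range P = Y, then P is an adjointable A-module map: P(x·a) = P(x)·a for all x ∈ E and a ∈ A, and ⟪P(x), y⟫ = ⟪x, P(y)⟫ for all x, y ∈ E. In particular Y is orthogonally complemented in E. -/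
open scoped RightActions

/-!
Let `y` be such that `P` fixes every `y • b`, let `P z = 0`, and put `a = ⟪y, z⟫`, `w = y • a`.
Then `⟪w, z⟫ = a⋆a` is positive and dominates `⟪w, w⟫ = a⋆⟪y, y⟫a ≤ c • a⋆a` for
`c = ‖⟪y, y⟫‖ + 1`, so expanding `‖w‖ = ‖P (w - t • z)‖ ≤ ‖w - t • z‖` and using that the norm
is monotone on positive elements gives `‖w‖² ≤ (1 - 2t/c) ‖w‖² + O(t²)` for small `t > 0`. Hence `w = 0`, so `a = 0`: the range
of `P` is orthogonal to its kernel. This makes `P` symmetric, and a symmetric map on a Hilbert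
module is automatically `A`-linear.
-/

/-- The December 2024 Mathlib `CStarModule` (right Hilbert C*-module, `SMul Aᵐᵒᵖ E`),
restored verbatim under a new name since Mathlib's `CStarModule` is now a left module. -/
class CStarModuleRight (A : outParam <| Type*) (E : Type*) [NonUnitalSemiring A] [StarRing A]
    [Module ℂ A] [AddCommGroup E] [Module ℂ E] [PartialOrder A] [SMul Aᵐᵒᵖ E] [Norm A] [Norm E]
    extends Inner A E where
  inner_add_right {x} {y} {z} : inner x (y + z) = inner x y + inner x z
  inner_self_nonneg {x} : 0 ≤ inner x x
  inner_self {x} : inner x x = 0 ↔ x = 0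
  inner_op_smul_right {a : A} {x y : E} : inner x (y <• a) = inner x y * a
  inner_smul_right_complex {z : ℂ} {x} {y} : inner x (z • y) = z • inner x y
  star_inner x y : star (inner x y) = inner y x
  norm_eq_sqrt_norm_inner_self x : ‖x‖ = √‖inner x x‖

open scoped InnerProductSpace Topology

namespace CStarModuleRight

variable {A E : Type*} [NonUnitalCStarAlgebra A] [PartialOrder A]
    [NormedAddCommGroup E] [Module ℂ E] [SMul Aᵐᵒᵖ E] [CStarModuleRight A E]

lemma inner_add_left {x y z : E} : ⟪x + y, z⟫_A = ⟪x, z⟫_A + ⟪y, z⟫_A := by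
  rw [← star_inner z, inner_add_right, star_add, star_inner, star_inner]

lemma inner_op_smul_left {a : A} {x y : E} : ⟪x <• a, y⟫_A = star a * ⟪x, y⟫_A := by
  rw [← star_inner y, inner_op_smul_right, star_mul, star_inner]

lemma inner_smul_right_real {r : ℝ} {x y : E} : ⟪x, r • y⟫_A = r • ⟪x, y⟫_A := by
  rw [RCLike.real_smul_eq_coe_smul (K := ℂ) r y, inner_smul_right_complex,
    ← RCLike.real_smul_eq_coe_smul]

lemma inner_smul_left_real {r : ℝ} {x y : E} : ⟪r • x, y⟫_A = r • ⟪x, y⟫_A := by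
  rw [← star_inner y, inner_smul_right_real, star_smul, star_trivial, star_inner]

lemma inner_sub_right {x y z : E} : ⟪x, y - z⟫_A = ⟪x, y⟫_A - ⟪x, z⟫_A :=
  eq_sub_of_add_eq (by rw [← inner_add_right, sub_add_cancel])

lemma inner_sub_left {x y z : E} : ⟪x - y, z⟫_A = ⟪x, z⟫_A - ⟪y, z⟫_A :=
  eq_sub_of_add_eq (by rw [← inner_add_left, sub_add_cancel])

lemma norm_sq_eq_norm_inner_self (x : E) : ‖x‖ ^ 2 = ‖⟪x, x⟫_A‖ := by
  rw [norm_eq_sqrt_norm_inner_self (A := A) x, Real.sq_sqrt (norm_nonneg _)]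

lemma inner_zero_left {x : E} : ⟪0, x⟫_A = 0 := by
  rw [← sub_self (0 : E), inner_sub_left, sub_self]

lemma ext_inner_left {u v : E} (h : ∀ w : E, ⟪w, u⟫_A = ⟪w, v⟫_A) : u = v := by
  rw [← sub_eq_zero, ← inner_self (A := A), inner_sub_right, h, sub_self]

lemma inner_map_eq_of_inner_map_sub_eq_zero {T : E → E}
    (hT : ∀ x y, ⟪T x, y - T y⟫_A = 0) (x y : E) : ⟪T x, y⟫_A = ⟪x, T y⟫_A := by
  have hx := hT x y
  have hy := congrArg star (hT y x)
  rw [star_inner, star_zero] at hy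
  rw [inner_sub_right, sub_eq_zero] at hx
  rw [inner_sub_left, sub_eq_zero] at hy
  rw [hx, hy]

lemma map_op_smul_of_inner_map_eq {T : E → E} (hT : ∀ x y, ⟪T x, y⟫_A = ⟪x, T y⟫_A)
    (x : E) (a : A) : T (x <• a) = T x <• a :=
  ext_inner_left fun w => by rw [← hT, inner_op_smul_right, inner_op_smul_right, hT]

variable [StarOrderedRing A]

lemma eq_zero_of_inner_self_le_smul_inner {w z : E} {c : ℝ} (hc : 0 < c)
    (hdom : ⟪w, w⟫_A ≤ c • ⟪w, z⟫_A) (hmin : ∀ t : ℝ, 0 < t → ‖w‖ ≤ ‖w - t • z‖) : w = 0 := by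
  set g := ⟪w, w⟫_A
  set p := ⟪w, z⟫_A
  set k := ⟪z, z⟫_A
  have hp : ⟪z, w⟫_A = p := by
    have hcp : IsSelfAdjoint (c • p) := by
      rw [← sub_add_cancel (c • p) g]
      exact (IsSelfAdjoint.of_nonneg (sub_nonneg.2 hdom)).add (.of_nonneg inner_self_nonneg)
    rw [← star_inner w z]
    refine smul_right_injective A hc.ne' ?_
    simpa [star_smul] using hcp.star_eq
  have hbound : ∀ t, 0 < t → t < c / 2 → 2 * ‖w‖ ^ 2 ≤ c * t * ‖k‖ := by
    intro t ht htc
    have hexp : ⟪w - t • z, w - t • z⟫_A = g - (2 * t) • p + t ^ 2 • k := by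
      simp only [inner_sub_left, inner_sub_right, inner_smul_left_real, inner_smul_right_real, hp]
      module
    have hle : c • ⟪w - t • z, w - t • z⟫_A ≤ (c - 2 * t) • g + (c * t ^ 2) • k := by
      rw [← sub_nonneg, hexp]
      convert smul_nonneg (by positivity : 0 ≤ 2 * t) (sub_nonneg.2 hdom) using 1
      module
    have hnorm : c * ‖w - t • z‖ ^ 2 ≤ (c - 2 * t) * ‖w‖ ^ 2 + c * t ^ 2 * ‖k‖ := by
      calc c * ‖w - t • z‖ ^ 2 = ‖c • ⟪w - t • z, w - t • z⟫_A‖ := by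
            rw [norm_smul, Real.norm_of_nonneg hc.le, norm_sq_eq_norm_inner_self]
        _ ≤ ‖(c - 2 * t) • g + (c * t ^ 2) • k‖ :=
            CStarAlgebra.norm_le_norm_of_nonneg_of_le (smul_nonneg hc.le inner_self_nonneg) hle
        _ ≤ ‖(c - 2 * t) • g‖ + ‖(c * t ^ 2) • k‖ := norm_add_le _ _
        _ = (c - 2 * t) * ‖w‖ ^ 2 + c * t ^ 2 * ‖k‖ := by
            rw [norm_smul, norm_smul, Real.norm_of_nonneg (by linarith),
              Real.norm_of_nonneg (by positivity), norm_sq_eq_norm_inner_self]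
    have hw := pow_le_pow_left₀ (norm_nonneg _) (hmin t ht) 2
    nlinarith
  have hlim : Filter.Tendsto (fun t : ℝ => c * t * ‖k‖) (𝓝[>] 0) (𝓝 0) :=
    tendsto_nhdsWithin_of_tendsto_nhds <|
      (by fun_prop : Continuous fun t : ℝ => c * t * ‖k‖).tendsto' 0 0 (by simp)
  have hw : 2 * ‖w‖ ^ 2 ≤ 0 := ge_of_tendsto hlim <|
    Filter.mem_of_superset (Ioo_mem_nhdsGT (by positivity)) fun t ht => hbound t ht.1 ht.2
  exact norm_le_zero_iff.1 (by nlinarith [norm_nonneg w])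

lemma inner_eq_zero_of_map_op_smul_eq_self_of_map_eq_zero {P : E →ₗ[ℂ] E}
    (hPc : ∀ x, ‖P x‖ ≤ ‖x‖) {y z : E} (hy : ∀ b : A, P (y <• b) = y <• b) (hz : P z = 0) :
    ⟪y, z⟫_A = 0 := by
  set a := ⟪y, z⟫_A
  have hya : y <• a = 0 := by
    refine eq_zero_of_inner_self_le_smul_inner (z := z) (c := ‖⟪y, y⟫_A‖ + 1) (by positivity)
      ?_ fun t _ => ?_
    · rw [inner_op_smul_left, inner_op_smul_right, inner_op_smul_left, ← mul_assoc, add_smul,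
        one_smul]
      exact (CStarAlgebra.star_left_conjugate_le_norm_smul (.of_nonneg inner_self_nonneg)).trans
        (le_add_of_nonneg_right (star_mul_self_nonneg a))
    · calc ‖y <• a‖ = ‖P (y <• a - t • z)‖ := by
            rw [map_sub, LinearMap.map_smul_of_tower P t z, hy, hz, smul_zero, sub_zero]
        _ ≤ ‖y <• a - t • z‖ := hPc _
  have hstar : star a * a = 0 := by rw [← inner_op_smul_left, hya, inner_zero_left]
  exact (CStarRing.star_mul_self_eq_zero_iff a).1 hstar

end CStarModuleRight

open CStarModuleRight in
theorem stmt_4_general {A E : Type*} [NonUnitalCStarAlgebra A] [PartialOrder A] [StarOrderedRing A]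
    [NormedAddCommGroup E] [Module ℂ E] [SMul Aᵐᵒᵖ E] [CStarModuleRight A E]
    (Y : Submodule ℂ E)
    (hYmod : ∀ y ∈ Y, ∀ a : A, y <• a ∈ Y)
    (P : E →ₗ[ℂ] E)
    (hP2 : ∀ x, P (P x) = P x)
    (hPc : ∀ x, ‖P x‖ ≤ ‖x‖)
    (hPr : Set.range P = (Y : Set E)) :
    (∀ (x : E) (a : A), P (x <• a) = P x <• a) ∧
    (∀ x y : E, inner (𝕜 := A) (P x) y = inner (𝕜 := A) x (P y)) ∧
    (∀ x : E, ∃ y z : E, y ∈ Y ∧ (∀ w ∈ Y, inner (𝕜 := A) w z = 0) ∧ x = y + z) := by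
  have hfix : ∀ y ∈ Y, P y = y := by
    intro y hy
    obtain ⟨v, rfl⟩ : y ∈ Set.range P := hPr ▸ hy
    exact hP2 v
  have hmem : ∀ x, P x ∈ Y := fun x => by
    rw [← SetLike.mem_coe, ← hPr]
    exact Set.mem_range_self x
  have horth : ∀ x y, ⟪P x, y - P y⟫_A = 0 := fun x y =>
    inner_eq_zero_of_map_op_smul_eq_self_of_map_eq_zero hPc
      (fun b => hfix _ (hYmod _ (hmem x) b)) (by rw [map_sub, hP2, sub_self])
  have hsymm := inner_map_eq_of_inner_map_sub_eq_zero horth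
  refine ⟨map_op_smul_of_inner_map_eq hsymm, hsymm,
    fun x => ⟨P x, x - P x, hmem x, fun w hw => ?_, by abel⟩⟩
  rw [← hfix w hw]
  exact horth w x

/-- Let `E` be a right Hilbert C*-module over a C*-algebra `A` and `Y ⊆ E` a
closed `A`-submodule.  If `P : E → E` is a contractive linear idempotent with `range P = Y`,
then `P` is an adjointable `A`-module map: `P(x·a) = P(x)·a` and `⟪Px, y⟫ = ⟪x, Py⟫`.
In particular `Y` is orthogonally complemented in `E`. -/
theorem stmt_4 {A E : Type*} [NonUnitalCStarAlgebra A] [PartialOrder A] [StarOrderedRing A]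
    [NormedAddCommGroup E] [Module ℂ E] [SMul Aᵐᵒᵖ E] [CStarModuleRight A E] [CompleteSpace E]
    (Y : Submodule ℂ E) (hYclosed : IsClosed (Y : Set E))
    (hYmod : ∀ y ∈ Y, ∀ a : A, y <• a ∈ Y)
    (P : E →ₗ[ℂ] E)
    (hP2 : ∀ x, P (P x) = P x)
    (hPc : ∀ x, ‖P x‖ ≤ ‖x‖)
    (hPr : Set.range P = (Y : Set E)) :
    (∀ (x : E) (a : A), P (x <• a) = P x <• a) ∧
    (∀ x y : E, inner (𝕜 := A) (P x) y = inner (𝕜 := A) x (P y)) ∧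
    (∀ x : E, ∃ y z : E, y ∈ Y ∧ (∀ w ∈ Y, inner (𝕜 := A) w z = 0) ∧ x = y + z) :=
  stmt_4_general Y hYmod P hP2 hPc hPr
end

section
/- Let B be a C*-algebra, X a closed linear subspace of B, and P : X → X a linear idempotent. Then P is both a complete left M-projection and a complete right M-projection if and only if P is a complete M-projection, i.e., for every n ≥ 1 and every n×n matrix x over X, ‖x‖ = max(‖Pₙx‖, ‖x − Pₙx‖) in Mₙ(B). -/
/-!
Write `a = Pₙx` and `b = x - Pₙx`, and test each condition on `2n × 2n` block matrices. Corner
embeddings `Mₙ(B) → M₂ₙ(B)` are injective ⋆-homomorphisms, hence isometric, so every block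
norm below is computed in `Mₙ(B)`.

For the row `R = [a b; 0 0]`, idempotence gives `P₂ₙR = [a 0; 0 0]`, so the left condition for `R`
reads `‖diag(a*a, b*b)‖ = ‖R‖²`. The left side is `‖diag(a, b)‖² = max(‖a‖, ‖b‖)²`, the maximum
because `diag(a*a, 0)` and `diag(0, b*b)` are orthogonal self-adjoint elements, and
`‖R‖² = ‖RR*‖ = ‖aa* + bb*‖ = ‖x‖²` by the right condition for `x`. Conversely, the `M`-condition
for the column `C = [a 0; b 0]` gives `‖C‖ = max(‖a‖, ‖b‖) = ‖x‖`, while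
`‖C‖² = ‖C*C‖ = ‖a*a + b*b‖`: the left condition. The row gives the right condition in the same way.
-/

open Matrix

namespace Matrix

lemma fromBlocks_sub {α l m n o : Type*} [AddGroup α] (A A' : Matrix n l α)
    (B B' : Matrix n m α) (C C' : Matrix o l α) (D D' : Matrix o m α) :
    fromBlocks A B C D - fromBlocks A' B' C' D'
      = fromBlocks (A - A') (B - B') (C - C') (D - D') := by
  simp [sub_eq_add_neg, fromBlocks_neg, fromBlocks_add]

lemma map_reindex {α β l m : Type*} (e : l ≃ m) (M : Matrix l l α) (f : α → β) :
    (reindex e e M).map f = reindex e e (M.map f) :=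
  rfl

variable (R : Type*) {α : Type*} [NonUnitalNonAssocSemiring α] [StarAddMonoid α]
  [Monoid R] [DistribMulAction R α] {l m : Type*} [Fintype l] [Fintype m]

def fromBlocks₁₁StarHom : Matrix l l α →⋆ₙₐ[R] Matrix (l ⊕ m) (l ⊕ m) α where
  toFun c := fromBlocks c 0 0 0
  map_smul' r c := by simp [fromBlocks_smul]
  map_zero' := fromBlocks_zero
  map_add' c d := by simp [fromBlocks_add]
  map_mul' c d := by simp [fromBlocks_multiply]
  map_star' c := by simp [star_eq_conjTranspose, fromBlocks_conjTranspose]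

def fromBlocks₂₂StarHom : Matrix m m α →⋆ₙₐ[R] Matrix (l ⊕ m) (l ⊕ m) α where
  toFun c := fromBlocks 0 0 0 c
  map_smul' r c := by simp [fromBlocks_smul]
  map_zero' := fromBlocks_zero
  map_add' c d := by simp [fromBlocks_add]
  map_mul' c d := by simp [fromBlocks_multiply]
  map_star' c := by simp [star_eq_conjTranspose, fromBlocks_conjTranspose]

lemma fromBlocks₁₁StarHom_injective :
    Function.Injective (fromBlocks₁₁StarHom R (α := α) (l := l) (m := m)) :=
  fun _ _ h => congrArg toBlocks₁₁ h

lemma fromBlocks₂₂StarHom_injective :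
    Function.Injective (fromBlocks₂₂StarHom R (α := α) (l := l) (m := m)) :=
  fun _ _ h => congrArg toBlocks₂₂ h

def reindexStarAlgEquiv (e : l ≃ m) : Matrix l l α ≃⋆ₐ[R] Matrix m m α where
  __ := reindexRingEquiv α e
  map_smul' r c := by simp [submatrix_smul]
  map_star' c := by simp [star_eq_conjTranspose]

lemma reindexStarAlgEquiv_apply (e : l ≃ m) (M : Matrix l l α) :
    reindexStarAlgEquiv R e M = reindex e e M :=
  rfl

end Matrix

section Transport

variable {R S M₁ M₂ : Type*} [NonUnitalNonAssocSemiring R] [Module ℂ R] [Star R]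
  [NonUnitalNonAssocSemiring S] [Module ℂ S] [Star S]
  [NonUnitalCStarAlgebra M₁] [NonUnitalCStarAlgebra M₂]

lemma NonUnitalStarAlgHom.norm_map_transport (ι₁ : R ≃⋆ₐ[ℂ] M₁) (ι₂ : S ≃⋆ₐ[ℂ] M₂)
    {f : R →⋆ₙₐ[ℂ] S} (hf : Function.Injective f) (r : R) : ‖ι₂ (f r)‖ = ‖ι₁ r‖ := by
  let φ : M₁ →⋆ₙₐ[ℂ] M₂ := (ι₂ : S →⋆ₙₐ[ℂ] M₂).comp (f.comp (ι₁.symm : M₁ →⋆ₙₐ[ℂ] R))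
  have hφ : Function.Injective φ := ι₂.injective.comp (hf.comp ι₁.symm.injective)
  simpa [φ] using NonUnitalStarAlgHom.norm_map φ hφ (ι₁ r)

lemma StarAlgEquiv.norm_apply_star_mul_self (ι : S ≃⋆ₐ[ℂ] M₁) (s : S) :
    ‖ι (star s * s)‖ = ‖ι s‖ ^ 2 := by
  rw [map_mul, map_star, CStarRing.norm_star_mul_self, sq]

lemma StarAlgEquiv.norm_apply_mul_star_self (ι : S ≃⋆ₐ[ℂ] M₁) (s : S) :
    ‖ι (s * star s)‖ = ‖ι s‖ ^ 2 := by
  rw [map_mul, map_star, CStarRing.norm_self_mul_star, sq]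

end Transport

namespace Matrix

variable {B : Type*} [NonUnitalCStarAlgebra B] {l m : Type*} [Fintype l] [Fintype m]
  {M₁ M₂ M₃ : Type*} [NonUnitalCStarAlgebra M₁] [NonUnitalCStarAlgebra M₂]
  [NonUnitalCStarAlgebra M₃]

lemma norm_fromBlocks₁₁ (ι₁ : Matrix l l B ≃⋆ₐ[ℂ] M₁) (ι₂ : Matrix (l ⊕ m) (l ⊕ m) B ≃⋆ₐ[ℂ] M₂)
    (c : Matrix l l B) : ‖ι₂ (fromBlocks c 0 0 0)‖ = ‖ι₁ c‖ :=
  NonUnitalStarAlgHom.norm_map_transport ι₁ ι₂ (fromBlocks₁₁StarHom_injective ℂ) c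

lemma norm_fromBlocks₂₂ (ι₁ : Matrix m m B ≃⋆ₐ[ℂ] M₁) (ι₂ : Matrix (l ⊕ m) (l ⊕ m) B ≃⋆ₐ[ℂ] M₂)
    (c : Matrix m m B) : ‖ι₂ (fromBlocks 0 0 0 c)‖ = ‖ι₁ c‖ :=
  NonUnitalStarAlgHom.norm_map_transport ι₁ ι₂ (fromBlocks₂₂StarHom_injective ℂ) c

lemma norm_fromBlocks₁₂ (ι₁ : Matrix m m B ≃⋆ₐ[ℂ] M₁) (ι₂ : Matrix (m ⊕ m) (m ⊕ m) B ≃⋆ₐ[ℂ] M₂)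
    (c : Matrix m m B) : ‖ι₂ (fromBlocks 0 c 0 0)‖ = ‖ι₁ c‖ := by
  refine (sq_eq_sq₀ (norm_nonneg _) (norm_nonneg _)).1 ?_
  rw [← ι₂.norm_apply_star_mul_self, ← ι₁.norm_apply_star_mul_self, ← norm_fromBlocks₂₂ ι₁ ι₂]
  simp [star_eq_conjTranspose, fromBlocks_conjTranspose, fromBlocks_multiply]

lemma norm_fromBlocks₂₁ (ι₁ : Matrix m m B ≃⋆ₐ[ℂ] M₁) (ι₂ : Matrix (m ⊕ m) (m ⊕ m) B ≃⋆ₐ[ℂ] M₂)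
    (c : Matrix m m B) : ‖ι₂ (fromBlocks 0 0 c 0)‖ = ‖ι₁ c‖ := by
  refine (sq_eq_sq₀ (norm_nonneg _) (norm_nonneg _)).1 ?_
  rw [← ι₂.norm_apply_star_mul_self, ← ι₁.norm_apply_star_mul_self, ← norm_fromBlocks₁₁ ι₁ ι₂]
  simp [star_eq_conjTranspose, fromBlocks_conjTranspose, fromBlocks_multiply]

lemma norm_fromBlocks_diagonal (ι₁ : Matrix l l B ≃⋆ₐ[ℂ] M₁) (ι₃ : Matrix m m B ≃⋆ₐ[ℂ] M₃)
    (ι₂ : Matrix (l ⊕ m) (l ⊕ m) B ≃⋆ₐ[ℂ] M₂) (p : Matrix l l B) (q : Matrix m m B) :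
    ‖ι₂ (fromBlocks p 0 0 q)‖ = max ‖ι₁ p‖ ‖ι₃ q‖ := by
  refine (sq_eq_sq₀ (norm_nonneg _) (le_max_of_le_left (norm_nonneg _))).1 ?_
  set P : Matrix (l ⊕ m) (l ⊕ m) B := fromBlocks p 0 0 0
  set Q : Matrix (l ⊕ m) (l ⊕ m) B := fromBlocks 0 0 0 q
  have hsplit : star (fromBlocks p 0 0 q) * fromBlocks p 0 0 q = star P * P + star Q * Q := by
    simp [P, Q, star_eq_conjTranspose, fromBlocks_conjTranspose, fromBlocks_multiply,
      fromBlocks_add]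
  have horth : ι₂ (star P * P) * ι₂ (star Q * Q) = 0 := by
    simp [P, Q, ← map_mul, star_eq_conjTranspose, fromBlocks_conjTranspose, fromBlocks_multiply]
  rw [← ι₂.norm_apply_star_mul_self, hsplit, map_add,
    IsSelfAdjoint.norm_add_eq_max ((IsSelfAdjoint.star_mul_self P).map ι₂)
      ((IsSelfAdjoint.star_mul_self Q).map ι₂) horth,
    ι₂.norm_apply_star_mul_self, ι₂.norm_apply_star_mul_self, norm_fromBlocks₁₁ ι₁ ι₂,
    norm_fromBlocks₂₂ ι₃ ι₂, pow_left_monotoneOn.map_max (norm_nonneg _) (norm_nonneg _)]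

end Matrix

section MDecomp

variable {S T M : Type*} [NonUnitalRing S] [Star S] [Module ℂ S] [NonUnitalRing T] [Star T]
  [Module ℂ T] [NonUnitalCStarAlgebra M]

/- The identities defining left, right and two-sided `M`-projections, at a single element `u` with
`a` in the role of `P u`, for the norm transported along `ι`. -/
def IsLeftMDecomp (ι : S ≃⋆ₐ[ℂ] M) (u a : S) : Prop :=
  ‖ι (star a * a + star (u - a) * (u - a))‖ = ‖ι u‖ ^ 2

def IsRightMDecomp (ι : S ≃⋆ₐ[ℂ] M) (u a : S) : Prop :=
  ‖ι (a * star a + (u - a) * star (u - a))‖ = ‖ι u‖ ^ 2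

def IsMDecomp (ι : S ≃⋆ₐ[ℂ] M) (u a : S) : Prop :=
  ‖ι u‖ = max ‖ι a‖ ‖ι (u - a)‖

variable (φ : S ≃⋆ₐ[ℂ] T) (ι : T ≃⋆ₐ[ℂ] M) (u a : S)

lemma isLeftMDecomp_trans_iff : IsLeftMDecomp (φ.trans ι) u a ↔ IsLeftMDecomp ι (φ u) (φ a) := by
  simp [IsLeftMDecomp, map_sub, map_star]

lemma isRightMDecomp_trans_iff :
    IsRightMDecomp (φ.trans ι) u a ↔ IsRightMDecomp ι (φ u) (φ a) := by
  simp [IsRightMDecomp, map_sub, map_star]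

lemma isMDecomp_trans_iff : IsMDecomp (φ.trans ι) u a ↔ IsMDecomp ι (φ u) (φ a) := by
  simp [IsMDecomp, map_sub]

end MDecomp

namespace Matrix

variable {B : Type*} [NonUnitalCStarAlgebra B] {m : Type*} [Fintype m]
  {M₁ M₂ : Type*} [NonUnitalCStarAlgebra M₁] [NonUnitalCStarAlgebra M₂]
  (ι₁ : Matrix m m B ≃⋆ₐ[ℂ] M₁) (ι₂ : Matrix (m ⊕ m) (m ⊕ m) B ≃⋆ₐ[ℂ] M₂) {u a : Matrix m m B}

lemma isMDecomp_of_isRightMDecomp_of_isLeftMDecomp_fromBlocks (hR : IsRightMDecomp ι₁ u a)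
    (hL : IsLeftMDecomp ι₂ (fromBlocks a (u - a) 0 0) (fromBlocks a 0 0 0)) :
    IsMDecomp ι₁ u a := by
  set b := u - a
  have hdiag : star (fromBlocks a 0 0 0 : Matrix (m ⊕ m) (m ⊕ m) B) * fromBlocks a 0 0 0
      + star (fromBlocks a b 0 0 - fromBlocks a 0 0 0) * (fromBlocks a b 0 0 - fromBlocks a 0 0 0)
      = star (fromBlocks a 0 0 b) * fromBlocks a 0 0 b := by
    simp [fromBlocks_sub, star_eq_conjTranspose, fromBlocks_conjTranspose, fromBlocks_multiply,
      fromBlocks_add]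
  have hrow : (fromBlocks a b 0 0 * star (fromBlocks a b 0 0) : Matrix (m ⊕ m) (m ⊕ m) B)
      = fromBlocks (a * star a + b * star b) 0 0 0 := by
    simp [star_eq_conjTranspose, fromBlocks_conjTranspose, fromBlocks_multiply]
  unfold IsLeftMDecomp at hL
  rw [hdiag, ι₂.norm_apply_star_mul_self, norm_fromBlocks_diagonal ι₁ ι₁ ι₂,
    ← ι₂.norm_apply_mul_star_self, hrow, norm_fromBlocks₁₁ ι₁ ι₂, hR] at hL
  exact ((sq_eq_sq₀ (le_max_of_le_left (norm_nonneg _)) (norm_nonneg _)).1 hL).symm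

lemma isLeftMDecomp_of_isMDecomp_of_isMDecomp_fromBlocks (hM : IsMDecomp ι₁ u a)
    (hM₂ : IsMDecomp ι₂ (fromBlocks a 0 (u - a) 0) (fromBlocks a 0 0 0)) :
    IsLeftMDecomp ι₁ u a := by
  set b := u - a
  have hcol : (star (fromBlocks a 0 b 0) * fromBlocks a 0 b 0 : Matrix (m ⊕ m) (m ⊕ m) B)
      = fromBlocks (star a * a + star b * b) 0 0 0 := by
    simp [star_eq_conjTranspose, fromBlocks_conjTranspose, fromBlocks_multiply]
  simp only [IsMDecomp, fromBlocks_sub, sub_self, sub_zero] at hM₂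
  rw [norm_fromBlocks₁₁ ι₁ ι₂, norm_fromBlocks₂₁ ι₁ ι₂, ← hM] at hM₂
  rw [IsLeftMDecomp, ← hM₂, ← ι₂.norm_apply_star_mul_self, hcol, norm_fromBlocks₁₁ ι₁ ι₂]

lemma isRightMDecomp_of_isMDecomp_of_isMDecomp_fromBlocks (hM : IsMDecomp ι₁ u a)
    (hM₂ : IsMDecomp ι₂ (fromBlocks a (u - a) 0 0) (fromBlocks a 0 0 0)) :
    IsRightMDecomp ι₁ u a := by
  set b := u - a
  have hrow : (fromBlocks a b 0 0 * star (fromBlocks a b 0 0) : Matrix (m ⊕ m) (m ⊕ m) B)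
      = fromBlocks (a * star a + b * star b) 0 0 0 := by
    simp [star_eq_conjTranspose, fromBlocks_conjTranspose, fromBlocks_multiply]
  simp only [IsMDecomp, fromBlocks_sub, sub_self, sub_zero] at hM₂
  rw [norm_fromBlocks₁₁ ι₁ ι₂, norm_fromBlocks₁₂ ι₁ ι₂, ← hM] at hM₂
  rw [IsRightMDecomp, ← hM₂, ← ι₂.norm_apply_mul_star_self, hrow, norm_fromBlocks₁₁ ι₁ ι₂]

end Matrix

namespace Matrix

variable {B : Type*} [NonUnitalCStarAlgebra B] {X : Submodule ℂ B} {P : X →ₗ[ℂ] X}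
  {m n : Type*}

lemma map_val_map (x : Matrix m n X) :
    (x.map P).map Subtype.val = x.map fun v => (P v : B) := rfl

lemma map_val_sub (x y : Matrix m n X) :
    (x - y).map Subtype.val = x.map Subtype.val - y.map Subtype.val :=
  Matrix.map_sub _ (fun _ _ => rfl) x y

lemma map_map_of_idempotent (hP : ∀ x, P (P x) = P x) (x : Matrix m n X) :
    (x.map P).map (fun v => (P v : B)) = x.map fun v => (P v : B) := by
  ext; simp [hP]

lemma map_sub_map_of_idempotent (hP : ∀ x, P (P x) = P x) (x : Matrix m n X) :
    (x - x.map P).map (fun v => (P v : B)) = 0 := by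
  ext; simp [hP]

lemma map_val_fromBlocks_row (x : Matrix m m X) :
    (fromBlocks (x.map P) (x - x.map P) 0 0 : Matrix (m ⊕ m) (m ⊕ m) X).map Subtype.val
      = fromBlocks (x.map fun v => (P v : B))
          (x.map Subtype.val - x.map fun v => (P v : B)) 0 0 := by
  simp only [fromBlocks_map, map_val_map, map_val_sub, Matrix.map_zero, ZeroMemClass.coe_zero]

lemma map_val_fromBlocks_col (x : Matrix m m X) :
    (fromBlocks (x.map P) 0 (x - x.map P) 0 : Matrix (m ⊕ m) (m ⊕ m) X).map Subtype.val
      = fromBlocks (x.map fun v => (P v : B)) 0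
          (x.map Subtype.val - x.map fun v => (P v : B)) 0 := by
  simp only [fromBlocks_map, map_val_map, map_val_sub, Matrix.map_zero, ZeroMemClass.coe_zero]

lemma map_fromBlocks_row_of_idempotent (hP : ∀ x, P (P x) = P x) (x : Matrix m m X) :
    (fromBlocks (x.map P) (x - x.map P) 0 0 : Matrix (m ⊕ m) (m ⊕ m) X).map (fun v => (P v : B))
      = fromBlocks (x.map fun v => (P v : B)) 0 0 0 := by
  simp [fromBlocks_map, map_map_of_idempotent hP, map_sub_map_of_idempotent hP]

lemma map_fromBlocks_col_of_idempotent (hP : ∀ x, P (P x) = P x) (x : Matrix m m X) :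
    (fromBlocks (x.map P) 0 (x - x.map P) 0 : Matrix (m ⊕ m) (m ⊕ m) X).map (fun v => (P v : B))
      = fromBlocks (x.map fun v => (P v : B)) 0 0 0 := by
  simp [fromBlocks_map, map_map_of_idempotent hP, map_sub_map_of_idempotent hP]

end Matrix

section CompleteMDecomp

variable {B : Type*} [NonUnitalCStarAlgebra B] {Mat : ℕ → Type*}
  [∀ n, NonUnitalCStarAlgebra (Mat n)] (ι : ∀ n, Matrix (Fin n) (Fin n) B ≃⋆ₐ[ℂ] Mat n)
  {X : Submodule ℂ B} (P : X →ₗ[ℂ] X)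

def IsCompleteLeftMDecomp : Prop :=
  ∀ n : ℕ, 1 ≤ n → ∀ x : Matrix (Fin n) (Fin n) X,
    IsLeftMDecomp (ι n) (x.map Subtype.val) (x.map fun v => (P v : B))

def IsCompleteRightMDecomp : Prop :=
  ∀ n : ℕ, 1 ≤ n → ∀ x : Matrix (Fin n) (Fin n) X,
    IsRightMDecomp (ι n) (x.map Subtype.val) (x.map fun v => (P v : B))

def IsCompleteMDecomp : Prop :=
  ∀ n : ℕ, 1 ≤ n → ∀ x : Matrix (Fin n) (Fin n) X,
    IsMDecomp (ι n) (x.map Subtype.val) (x.map fun v => (P v : B))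

variable {ι P} {n : ℕ}

lemma IsCompleteLeftMDecomp.isLeftMDecomp_sum (h : IsCompleteLeftMDecomp ι P) (hn : 1 ≤ n)
    (z : Matrix (Fin n ⊕ Fin n) (Fin n ⊕ Fin n) X) :
    IsLeftMDecomp ((reindexStarAlgEquiv ℂ finSumFinEquiv).trans (ι (n + n)))
      (z.map Subtype.val) (z.map fun v => (P v : B)) := by
  have := h (n + n) (by omega) (reindex finSumFinEquiv finSumFinEquiv z)
  rwa [map_reindex, map_reindex, ← reindexStarAlgEquiv_apply ℂ, ← reindexStarAlgEquiv_apply ℂ,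
    ← isLeftMDecomp_trans_iff] at this

lemma IsCompleteMDecomp.isMDecomp_sum (h : IsCompleteMDecomp ι P) (hn : 1 ≤ n)
    (z : Matrix (Fin n ⊕ Fin n) (Fin n ⊕ Fin n) X) :
    IsMDecomp ((reindexStarAlgEquiv ℂ finSumFinEquiv).trans (ι (n + n)))
      (z.map Subtype.val) (z.map fun v => (P v : B)) := by
  have := h (n + n) (by omega) (reindex finSumFinEquiv finSumFinEquiv z)
  rwa [map_reindex, map_reindex, ← reindexStarAlgEquiv_apply ℂ, ← reindexStarAlgEquiv_apply ℂ,
    ← isMDecomp_trans_iff] at this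

end CompleteMDecomp

theorem stmt_5_general {B : Type*} [NonUnitalCStarAlgebra B]
    (Mat : ℕ → Type*) [∀ n, NonUnitalCStarAlgebra (Mat n)]
    (ι : ∀ n, Matrix (Fin n) (Fin n) B ≃⋆ₐ[ℂ] Mat n)
    (X : Submodule ℂ B)
    (P : X →ₗ[ℂ] X) (hP : ∀ x, P (P x) = P x) :
    ((∀ n : ℕ, 1 ≤ n → ∀ x : Matrix (Fin n) (Fin n) X,
        ‖ι n (star (x.map fun v => ((P v : B))) * (x.map fun v => ((P v : B))) +
            star (x.map Subtype.val - x.map fun v => ((P v : B))) *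
              (x.map Subtype.val - x.map fun v => ((P v : B))))‖
          = ‖ι n (x.map Subtype.val)‖ ^ 2) ∧
     (∀ n : ℕ, 1 ≤ n → ∀ x : Matrix (Fin n) (Fin n) X,
        ‖ι n ((x.map fun v => ((P v : B))) * star (x.map fun v => ((P v : B))) +
            (x.map Subtype.val - x.map fun v => ((P v : B))) *
              star (x.map Subtype.val - x.map fun v => ((P v : B))))‖
          = ‖ι n (x.map Subtype.val)‖ ^ 2)) ↔
    (∀ n : ℕ, 1 ≤ n → ∀ x : Matrix (Fin n) (Fin n) X,
        ‖ι n (x.map Subtype.val)‖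
          = max ‖ι n (x.map fun v => ((P v : B)))‖
              ‖ι n (x.map Subtype.val - x.map fun v => ((P v : B)))‖) := by
  show IsCompleteLeftMDecomp ι P ∧ IsCompleteRightMDecomp ι P ↔ IsCompleteMDecomp ι P
  refine ⟨fun ⟨hL, hR⟩ n hn x => ?_, fun hM => ⟨fun n hn x => ?_, fun n hn x => ?_⟩⟩
  · have hrow := hL.isLeftMDecomp_sum hn (fromBlocks (x.map P) (x - x.map P) 0 0)
    rw [map_val_fromBlocks_row, map_fromBlocks_row_of_idempotent hP] at hrow
    exact isMDecomp_of_isRightMDecomp_of_isLeftMDecomp_fromBlocks _ _ (hR n hn x) hrow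
  · have hcol := hM.isMDecomp_sum hn (fromBlocks (x.map P) 0 (x - x.map P) 0)
    rw [map_val_fromBlocks_col, map_fromBlocks_col_of_idempotent hP] at hcol
    exact isLeftMDecomp_of_isMDecomp_of_isMDecomp_fromBlocks _ _ (hM n hn x) hcol
  · have hrow := hM.isMDecomp_sum hn (fromBlocks (x.map P) (x - x.map P) 0 0)
    rw [map_val_fromBlocks_row, map_fromBlocks_row_of_idempotent hP] at hrow
    exact isRightMDecomp_of_isMDecomp_of_isMDecomp_fromBlocks _ _ (hM n hn x) hrow

/-- Let `B` be a C*-algebra, `X ⊆ B` a closed linear subspace and `P : X → X`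
a linear idempotent.  The C*-algebra `Mₙ(B)` (with its unique C*-norm) is modelled by an
arbitrary C*-algebra `Mat n` with a ⋆-algebra isomorphism `ι n` from the ⋆-algebra of matrices
`Matrix (Fin n) (Fin n) B`; matrices over `X` inherit this norm.  Then `P` is both a complete
left `M`-projection and a complete right `M`-projection iff `P` is a complete `M`-projection,
i.e. `‖x‖ = max(‖Pₙx‖, ‖x − Pₙx‖)` for every `n ≥ 1` and every `n × n` matrix `x` over `X`. -/
theorem stmt_5 {B : Type*} [NonUnitalCStarAlgebra B]
    (Mat : ℕ → Type*) [∀ n, NonUnitalCStarAlgebra (Mat n)]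
    (ι : ∀ n, Matrix (Fin n) (Fin n) B ≃⋆ₐ[ℂ] Mat n)
    (X : Submodule ℂ B) (hX : IsClosed (X : Set B))
    (P : X →ₗ[ℂ] X) (hP : ∀ x, P (P x) = P x) :
    ((∀ n : ℕ, 1 ≤ n → ∀ x : Matrix (Fin n) (Fin n) X,
        ‖ι n (star (x.map fun v => ((P v : B))) * (x.map fun v => ((P v : B))) +
            star (x.map Subtype.val - x.map fun v => ((P v : B))) *
              (x.map Subtype.val - x.map fun v => ((P v : B))))‖
          = ‖ι n (x.map Subtype.val)‖ ^ 2) ∧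
     (∀ n : ℕ, 1 ≤ n → ∀ x : Matrix (Fin n) (Fin n) X,
        ‖ι n ((x.map fun v => ((P v : B))) * star (x.map fun v => ((P v : B))) +
            (x.map Subtype.val - x.map fun v => ((P v : B))) *
              star (x.map Subtype.val - x.map fun v => ((P v : B))))‖
          = ‖ι n (x.map Subtype.val)‖ ^ 2)) ↔
    (∀ n : ℕ, 1 ≤ n → ∀ x : Matrix (Fin n) (Fin n) X,
        ‖ι n (x.map Subtype.val)‖
          = max ‖ι n (x.map fun v => ((P v : B)))‖
              ‖ι n (x.map Subtype.val - x.map fun v => ((P v : B)))‖) :=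
  stmt_5_general Mat ι X P hP
end

section
/- Let B be a C*-algebra, X a closed linear subspace of B, and P : X → X a linear idempotent. Then P is a complete left M-projection if and only if both of the following hold: (i) for every n ≥ 1 and every n×n matrix x over X, ‖(Pₙx)*(Pₙx) + (x − Pₙx)*(x − Pₙx)‖ ≤ ‖x‖² (the map ν_P^c is completely contractive), and (ii) for every n ≥ 1 and all n×n matrices x, y over X, ‖Pₙx + y − Pₙy‖² ≤ ‖x*x + y*y‖ (the map μ_P^c is completely contractive). -/
/-!
Write `ν(x) = (Pₙx, x − Pₙx)` and `μ(x, y) = Pₙx + y − Pₙy`. Since `μ ∘ ν = id`, contractivity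
of `μ` gives `‖x‖² ≤ ‖ν(x)‖²`, which together with contractivity of `ν` makes `ν` isometric.
Conversely, if `ν` is isometric at every level, then `w = μ(x, y)` lies in `Mₙ(X)` with
`ν(w) = (Pₙx, y − Pₙy)`, so `‖w‖²` is the norm of `(Pₙx)*(Pₙx) + (y − Pₙy)*(y − Pₙy)`. This is
dominated by the sum `ν(x)*ν(x) + ν(y)*ν(y)` of four positive terms, which is the corner of
`ν(c)*ν(c)` for the `2n × 2n` matrix `c = [[x, 0], [y, 0]]`; isometry of `ν` at level `2n` and the
C⋆-identity give `‖ν(c)‖² = ‖c‖² = ‖x*x + y*y‖`.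
-/

namespace Matrix

variable {α : Type*} {n : ℕ}

/-- The column `(x, y)`, padded with zeros to a square matrix. -/
def colStack [Zero α] (x y : Matrix (Fin n) (Fin n) α) : Matrix (Fin (n + n)) (Fin (n + n)) α :=
  reindex finSumFinEquiv finSumFinEquiv (fromBlocks x 0 y 0)

theorem colStack_inj [Zero α] {x y x' y' : Matrix (Fin n) (Fin n) α} :
    colStack x y = colStack x' y' ↔ x = x' ∧ y = y' := by
  rw [colStack, colStack, (reindex _ _).injective.eq_iff, fromBlocks_inj]
  simp

theorem colStack_map [Zero α] {β : Type*} [Zero β] (f : α → β) (hf : f 0 = 0)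
    (x y : Matrix (Fin n) (Fin n) α) :
    (colStack x y).map f = colStack (x.map f) (y.map f) := by
  rw [colStack, colStack, reindex_apply, reindex_apply, ← submatrix_map, fromBlocks_map,
    Matrix.map_zero f hf]

theorem colStack_add [AddZeroClass α] (x y x' y' : Matrix (Fin n) (Fin n) α) :
    colStack x y + colStack x' y' = colStack (x + x') (y + y') := by
  ext i j
  simp only [colStack, reindex_apply, add_apply, submatrix_apply]
  rcases finSumFinEquiv.symm i with i | i <;> rcases finSumFinEquiv.symm j with j | j <;> simp

theorem colStack_sub [SubNegZeroMonoid α] (x y x' y' : Matrix (Fin n) (Fin n) α) :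
    colStack x y - colStack x' y' = colStack (x - x') (y - y') := by
  ext i j
  simp only [colStack, reindex_apply, sub_apply, submatrix_apply]
  rcases finSumFinEquiv.symm i with i | i <;> rcases finSumFinEquiv.symm j with j | j <;> simp

theorem star_colStack_mul_colStack [NonUnitalNonAssocSemiring α] [StarRing α]
    (x y x' y' : Matrix (Fin n) (Fin n) α) :
    star (colStack x y) * colStack x' y' = colStack (star x * x' + star y * y') 0 := by
  simp [colStack, star_eq_conjTranspose, conjTranspose_submatrix, submatrix_mul_equiv,
    fromBlocks_conjTranspose, fromBlocks_multiply]

variable (α n) in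
@[simps]
def cornerStarHom (R : Type*) [Monoid R] [NonUnitalNonAssocSemiring α] [StarRing α]
    [DistribMulAction R α] :
    Matrix (Fin n) (Fin n) α →⋆ₙₐ[R] Matrix (Fin (n + n)) (Fin (n + n)) α where
  toFun a := colStack a 0
  map_smul' c a := by
    ext i j
    simp only [colStack, reindex_apply, smul_apply, submatrix_apply, MonoidHom.id_apply]
    rcases finSumFinEquiv.symm i with i | i <;> rcases finSumFinEquiv.symm j with j | j <;> simp
  map_zero' := by simp [colStack]
  map_add' a b := by rw [colStack_add, add_zero]
  map_mul' a b := by simp [colStack, submatrix_mul_equiv, fromBlocks_multiply]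
  map_star' a := by
    simp [colStack, star_eq_conjTranspose, conjTranspose_submatrix, fromBlocks_conjTranspose]

end Matrix

open Matrix

section CStarAlgebra

variable {A B A' : Type*} [NonUnitalCStarAlgebra A] [NonUnitalCStarAlgebra B]
  [NonUnitalCStarAlgebra A']

theorem norm_star_mul_self_add_le (a b c d : A) :
    ‖star a * a + star d * d‖ ≤ ‖star a * a + star b * b + (star c * c + star d * d)‖ := by
  let _ := CStarAlgebra.spectralOrder A
  have := CStarAlgebra.spectralOrderedRing A
  refine CStarAlgebra.norm_le_norm_of_nonneg_of_le
    (add_nonneg (star_mul_self_nonneg a) (star_mul_self_nonneg d)) ?_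
  have hbc : 0 ≤ star b * b + star c * c :=
    add_nonneg (star_mul_self_nonneg b) (star_mul_self_nonneg c)
  calc star a * a + star d * d ≤ star a * a + star d * d + (star b * b + star c * c) :=
        le_add_of_nonneg_right hbc
    _ = _ := by abel

variable {n : ℕ} (ι : Matrix (Fin n) (Fin n) B ≃⋆ₐ[ℂ] A)
  (ι₂ : Matrix (Fin (n + n)) (Fin (n + n)) B ≃⋆ₐ[ℂ] A')

theorem norm_colStack_zero (a : Matrix (Fin n) (Fin n) B) : ‖ι₂ (colStack a 0)‖ = ‖ι a‖ := by
  let φ : A →⋆ₙₐ[ℂ] A' := (ι₂ : Matrix (Fin (n + n)) (Fin (n + n)) B →⋆ₙₐ[ℂ] A').comp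
    ((cornerStarHom B n ℂ).comp (ι.symm : A →⋆ₙₐ[ℂ] Matrix (Fin n) (Fin n) B))
  have hφ : Function.Injective φ := fun u v huv =>
    ι.symm.injective (colStack_inj.mp (ι₂.injective huv)).1
  simpa [φ] using NonUnitalStarAlgHom.norm_map φ hφ (ι a)

theorem norm_colStack_sq (x y : Matrix (Fin n) (Fin n) B) :
    ‖ι₂ (colStack x y)‖ ^ 2 = ‖ι (star x * x + star y * y)‖ := by
  rw [sq, ← CStarRing.norm_star_mul_self, ← map_star, ← map_mul, star_colStack_mul_colStack,
    norm_colStack_zero ι]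

end CStarAlgebra

section Projection

variable {B : Type*} [NonUnitalCStarAlgebra B] {X : Submodule ℂ B} (P : X →ₗ[ℂ] X) {m : Type*}

/-- `ν(x)*ν(x)` for the column `ν(x) = (Pₙx, x − Pₙx)`. -/
def nuSq [Fintype m] (x : Matrix m m X) : Matrix m m B :=
  star (x.map fun v => (P v : B)) * x.map (fun v => (P v : B)) +
    star (x.map Subtype.val - x.map fun v => (P v : B)) *
      (x.map Subtype.val - x.map fun v => (P v : B))

theorem nuSq_colStack {n : ℕ} (x y : Matrix (Fin n) (Fin n) X) :
    nuSq P (colStack x y) = colStack (nuSq P x + nuSq P y) 0 := by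
  simp only [nuSq, colStack_map (Subtype.val : X → B) X.coe_zero,
    colStack_map (fun v => (P v : B)) (by simp), colStack_sub, star_colStack_mul_colStack,
    colStack_add, add_zero]
  congr 1
  abel

variable {P}

theorem map_coe_mu (x y : Matrix m m X) :
    (x.map P + (y - y.map P)).map Subtype.val =
      x.map (fun v => (P v : B)) + y.map Subtype.val - y.map fun v => (P v : B) := by
  ext i j
  simp [add_sub_assoc]

theorem nuSq_mu [Fintype m] (hP : ∀ v, P (P v) = P v) (x y : Matrix m m X) :
    nuSq P (x.map P + (y - y.map P)) =
      star (x.map fun v => (P v : B)) * x.map (fun v => (P v : B)) +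
        star (y.map Subtype.val - y.map fun v => (P v : B)) *
          (y.map Subtype.val - y.map fun v => (P v : B)) := by
  have hPw : (x.map P + (y - y.map P)).map (fun v => (P v : B)) = x.map fun v => (P v : B) := by
    ext i j
    simp [hP]
  have hQw : (x.map P + (y - y.map P)).map Subtype.val -
      (x.map P + (y - y.map P)).map (fun v => (P v : B)) =
        y.map Subtype.val - y.map fun v => (P v : B) := by
    rw [map_coe_mu, hPw]
    abel
  rw [nuSq, hQw, hPw]

theorem mu_comp_nu (hP : ∀ v, P (P v) = P v) (x : Matrix m m X) :
    (x.map P).map (fun v => (P v : B)) + (x - x.map P).map Subtype.val -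
      (x - x.map P).map (fun v => (P v : B)) = x.map Subtype.val := by
  ext i j
  simp [hP]

theorem nuSq_eq_star_mul_self_add [Fintype m] (x : Matrix m m X) :
    nuSq P x = star ((x.map P).map Subtype.val) * (x.map P).map Subtype.val +
      star ((x - x.map P).map Subtype.val) * (x - x.map P).map Subtype.val := by
  have : (x - x.map P).map Subtype.val = x.map Subtype.val - x.map fun v => (P v : B) := by
    ext i j
    simp
  rw [this]
  rfl

theorem norm_mu_sq_le_of_norm_nuSq_eq {Mat : ℕ → Type*} [∀ n, NonUnitalCStarAlgebra (Mat n)]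
    (ι : ∀ n, Matrix (Fin n) (Fin n) B ≃⋆ₐ[ℂ] Mat n) (hP : ∀ v, P (P v) = P v)
    (hν : ∀ n : ℕ, 1 ≤ n → ∀ x : Matrix (Fin n) (Fin n) X,
      ‖ι n (nuSq P x)‖ = ‖ι n (x.map Subtype.val)‖ ^ 2)
    (n : ℕ) (hn : 1 ≤ n) (x y : Matrix (Fin n) (Fin n) X) :
    ‖ι n ((x.map fun v => (P v : B)) + y.map Subtype.val - y.map fun v => (P v : B))‖ ^ 2 ≤
      ‖ι n (star (x.map Subtype.val) * x.map Subtype.val +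
        star (y.map Subtype.val) * y.map Subtype.val)‖ := by
  set px := ι n (x.map fun v => (P v : B))
  set py := ι n (y.map fun v => (P v : B))
  set qx := ι n (x.map Subtype.val - x.map fun v => (P v : B))
  set qy := ι n (y.map Subtype.val - y.map fun v => (P v : B))
  calc _ = ‖ι n (nuSq P (x.map P + (y - y.map P)))‖ := by rw [hν n hn, map_coe_mu]
    _ = ‖star px * px + star qy * qy‖ := by
      rw [nuSq_mu hP]; simp only [map_add, map_mul, map_star]; rfl
    _ ≤ ‖star px * px + star py * py + (star qx * qx + star qy * qy)‖ :=
      norm_star_mul_self_add_le px py qx qy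
    _ = ‖ι n (nuSq P x + nuSq P y)‖ := by
      simp only [nuSq, map_add, map_mul, map_star]
      congr 1
      abel
    _ = ‖ι (n + n) (nuSq P (colStack x y))‖ := by
      rw [nuSq_colStack, norm_colStack_zero (ι n)]
    _ = ‖ι (n + n) ((colStack x y).map Subtype.val)‖ ^ 2 := hν _ (by omega) _
    _ = _ := by rw [colStack_map (Subtype.val : X → B) X.coe_zero, norm_colStack_sq (ι n)]

end Projection

theorem stmt_6_general {B : Type*} [NonUnitalCStarAlgebra B]
    (Mat : ℕ → Type*) [∀ n, NonUnitalCStarAlgebra (Mat n)]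
    (ι : ∀ n, Matrix (Fin n) (Fin n) B ≃⋆ₐ[ℂ] Mat n)
    (X : Submodule ℂ B)
    (P : X →ₗ[ℂ] X) (hP : ∀ x, P (P x) = P x) :
    (∀ n : ℕ, 1 ≤ n → ∀ x : Matrix (Fin n) (Fin n) X,
        ‖ι n (star (x.map fun v => ((P v : B))) * (x.map fun v => ((P v : B))) +
            star (x.map Subtype.val - x.map fun v => ((P v : B))) *
              (x.map Subtype.val - x.map fun v => ((P v : B))))‖
          = ‖ι n (x.map Subtype.val)‖ ^ 2) ↔
    ((∀ n : ℕ, 1 ≤ n → ∀ x : Matrix (Fin n) (Fin n) X,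
        ‖ι n (star (x.map fun v => ((P v : B))) * (x.map fun v => ((P v : B))) +
            star (x.map Subtype.val - x.map fun v => ((P v : B))) *
              (x.map Subtype.val - x.map fun v => ((P v : B))))‖
          ≤ ‖ι n (x.map Subtype.val)‖ ^ 2) ∧
     (∀ n : ℕ, 1 ≤ n → ∀ x y : Matrix (Fin n) (Fin n) X,
        ‖ι n ((x.map fun v => ((P v : B))) + y.map Subtype.val - y.map fun v => ((P v : B)))‖ ^ 2
          ≤ ‖ι n (star (x.map Subtype.val) * (x.map Subtype.val) +
              star (y.map Subtype.val) * (y.map Subtype.val))‖)) := by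
  refine ⟨fun hν => ⟨fun n hn x => (hν n hn x).le, norm_mu_sq_le_of_norm_nuSq_eq ι hP hν⟩, ?_⟩
  rintro ⟨hν, hμ⟩ n hn x
  refine (hν n hn x).antisymm ?_
  have := hμ n hn (x.map P) (x - x.map P)
  rwa [mu_comp_nu hP, ← nuSq_eq_star_mul_self_add] at this

/-- Let `B` be a C*-algebra, `X ⊆ B` a closed linear subspace and `P : X → X`
a linear idempotent.  The C*-algebra `Mₙ(B)` (with its unique C*-norm) is modelled by an
arbitrary C*-algebra `Mat n` with a ⋆-algebra isomorphism `ι n` from the ⋆-algebra of matrices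
`Matrix (Fin n) (Fin n) B`; matrices over `X` inherit this norm.  Then `P` is a complete left
`M`-projection iff (i) `‖(Pₙx)*(Pₙx) + (x − Pₙx)*(x − Pₙx)‖ ≤ ‖x‖²` for every `n ≥ 1` and every
`n × n` matrix `x` over `X` (the map `ν_P^c` is completely contractive), and
(ii) `‖Pₙx + y − Pₙy‖² ≤ ‖x*x + y*y‖` for every `n ≥ 1` and all `n × n` matrices `x, y` over `X`
(the map `μ_P^c` is completely contractive). -/
theorem stmt_6 {B : Type*} [NonUnitalCStarAlgebra B]
    (Mat : ℕ → Type*) [∀ n, NonUnitalCStarAlgebra (Mat n)]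
    (ι : ∀ n, Matrix (Fin n) (Fin n) B ≃⋆ₐ[ℂ] Mat n)
    (X : Submodule ℂ B) (hX : IsClosed (X : Set B))
    (P : X →ₗ[ℂ] X) (hP : ∀ x, P (P x) = P x) :
    (∀ n : ℕ, 1 ≤ n → ∀ x : Matrix (Fin n) (Fin n) X,
        ‖ι n (star (x.map fun v => ((P v : B))) * (x.map fun v => ((P v : B))) +
            star (x.map Subtype.val - x.map fun v => ((P v : B))) *
              (x.map Subtype.val - x.map fun v => ((P v : B))))‖
          = ‖ι n (x.map Subtype.val)‖ ^ 2) ↔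
    ((∀ n : ℕ, 1 ≤ n → ∀ x : Matrix (Fin n) (Fin n) X,
        ‖ι n (star (x.map fun v => ((P v : B))) * (x.map fun v => ((P v : B))) +
            star (x.map Subtype.val - x.map fun v => ((P v : B))) *
              (x.map Subtype.val - x.map fun v => ((P v : B))))‖
          ≤ ‖ι n (x.map Subtype.val)‖ ^ 2) ∧
     (∀ n : ℕ, 1 ≤ n → ∀ x y : Matrix (Fin n) (Fin n) X,
        ‖ι n ((x.map fun v => ((P v : B))) + y.map Subtype.val - y.map fun v => ((P v : B)))‖ ^ 2
          ≤ ‖ι n (star (x.map Subtype.val) * (x.map Subtype.val) +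
              star (y.map Subtype.val) * (y.map Subtype.val))‖)) :=
  stmt_6_general Mat ι X P hP
end

section
/- Let B be a C*-algebra, X a closed linear subspace of B, P : X → X a complete left M-projection, and Q : X → X a linear idempotent with ‖Q(x)‖ ≤ ‖x‖ for all x ∈ X. If range Q = range P, then Q = P. -/
/-!
Put `a = Qx - Px` and `y = x - Px`; both ranges being `range P`, the vector `z = t • a + y`
satisfies `Pz = t • a`, `z - Pz = y` and `Qz = (t + 1) • a`. Contractivity of `Q` and the
`1 × 1` case of the M-projection identity (with `‖c*c + d*d‖ ≤ ‖c‖² + ‖d‖²`) give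
`(t + 1)² ‖a‖² ≤ ‖z‖² ≤ t² ‖a‖² + ‖y‖²` for every `t ≥ 0`, which forces `a = 0`.
-/

namespace Matrix

variable {m R A : Type*} [Fintype m] [Unique m]

def uniqueStarAlgEquiv [NonUnitalNonAssocSemiring A] [SMul R A] [Star A] :
    Matrix m m A ≃⋆ₐ[R] A where
  __ := uniqueAddEquiv
  map_mul' M N := by simp [mul_apply]
  map_star' M := by simp [star_apply]
  map_smul' r M := by simp

end Matrix

lemma StarAlgEquiv.norm_apply_fin_one {B M : Type*} [NonUnitalCStarAlgebra B]
    [NonUnitalCStarAlgebra M] (ι : Matrix (Fin 1) (Fin 1) B ≃⋆ₐ[ℂ] M)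
    (x : Matrix (Fin 1) (Fin 1) B) : ‖ι x‖ = ‖x 0 0‖ := by
  rw [← StarAlgEquiv.norm_map (ι.symm.trans Matrix.uniqueStarAlgEquiv) (ι x),
    StarAlgEquiv.trans_apply, StarAlgEquiv.symm_apply_apply]
  rfl

lemma eq_zero_of_forall_add_one_sq_mul_le {α β : ℝ}
    (h : ∀ t : ℝ, 0 ≤ t → (t + 1) ^ 2 * α ^ 2 ≤ t ^ 2 * α ^ 2 + β) : α = 0 := by
  by_contra hα
  have hα2 : 0 < α ^ 2 := by positivity
  have hβ : α ^ 2 ≤ β := by nlinarith [h 0 le_rfl]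
  have hβ_at := h (β / α ^ 2) (div_nonneg (hα2.le.trans hβ) hα2.le)
  have hcancel : β / α ^ 2 * α ^ 2 = β := div_mul_cancel₀ _ hα2.ne'
  nlinarith

theorem LinearMap.eq_of_range_eq_of_norm_le {𝕜 E : Type*} [RCLike 𝕜] [NormedAddCommGroup E]
    [NormedSpace 𝕜 E] {P Q : E →ₗ[𝕜] E} (hP : IsIdempotentElem P) (hQ : IsIdempotentElem Q)
    (hrange : range Q = range P) (hPsq : ∀ z, ‖z‖ ^ 2 ≤ ‖P z‖ ^ 2 + ‖z - P z‖ ^ 2)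
    (hQc : ∀ z, ‖Q z‖ ≤ ‖z‖) : Q = P := by
  have hPP (v : E) : P (P v) = P v := LinearMap.congr_fun hP.eq v
  have hQQ (v : E) : Q (Q v) = Q v := LinearMap.congr_fun hQ.eq v
  have hQP (v : E) : Q (P v) = P v :=
    LinearMap.congr_fun ((IsIdempotentElem.comp_eq_right_iff hQ P).2 hrange.ge) v
  have hPQ (v : E) : P (Q v) = Q v :=
    LinearMap.congr_fun ((IsIdempotentElem.comp_eq_right_iff hP Q).2 hrange.le) v
  ext x
  set a := Q x - P x
  set y := x - P x
  have hPa : P a = a := by simp only [a, map_sub, hPQ, hPP]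
  have hQa : Q a = a := by simp only [a, map_sub, hQQ, hQP]
  have hPy : P y = 0 := by simp only [y, map_sub, hPP, sub_self]
  have hQy : Q y = a := by simp only [y, a, map_sub, hQP]
  suffices ‖a‖ = 0 from sub_eq_zero.1 (norm_eq_zero.1 this)
  refine eq_zero_of_forall_add_one_sq_mul_le (β := ‖y‖ ^ 2) fun t ht => ?_
  set z := (t : 𝕜) • a + y
  have hPz : P z = (t : 𝕜) • a := by simp only [z, map_add, map_smul, hPa, hPy, add_zero]
  have hQz : Q z = ((t + 1 : ℝ) : 𝕜) • a := by
    simp only [z, map_add, map_smul, hQa, hQy]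
    push_cast
    rw [add_smul, one_smul]
  calc (t + 1) ^ 2 * ‖a‖ ^ 2 = ‖Q z‖ ^ 2 := by
        rw [hQz, norm_smul, RCLike.norm_of_nonneg (by linarith)]; ring
    _ ≤ ‖z‖ ^ 2 := pow_le_pow_left₀ (norm_nonneg _) (hQc z) 2
    _ ≤ ‖P z‖ ^ 2 + ‖z - P z‖ ^ 2 := hPsq z
    _ = t ^ 2 * ‖a‖ ^ 2 + ‖y‖ ^ 2 := by
        rw [hPz, add_sub_cancel_left, norm_smul, RCLike.norm_of_nonneg ht]; ring

theorem stmt_8_general {B : Type*} [NonUnitalCStarAlgebra B]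
    (Mat : ℕ → Type*) [∀ n, NonUnitalCStarAlgebra (Mat n)]
    (ι : ∀ n, Matrix (Fin n) (Fin n) B ≃⋆ₐ[ℂ] Mat n)
    (X : Submodule ℂ B)
    (P : X →ₗ[ℂ] X) (hP2 : ∀ x, P (P x) = P x)
    (hPM : ∀ n : ℕ, 1 ≤ n → ∀ x : Matrix (Fin n) (Fin n) X,
        ‖ι n (star (x.map fun v => ((P v : B))) * (x.map fun v => ((P v : B))) +
            star (x.map Subtype.val - x.map fun v => ((P v : B))) *
              (x.map Subtype.val - x.map fun v => ((P v : B))))‖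
          = ‖ι n (x.map Subtype.val)‖ ^ 2)
    (Q : X →ₗ[ℂ] X) (hQ2 : ∀ x, Q (Q x) = Q x)
    (hQc : ∀ x : X, ‖(Q x : B)‖ ≤ ‖(x : B)‖)
    (hrange : Set.range Q = Set.range P) :
    Q = P := by
  have hPsq (z : X) : ‖z‖ ^ 2 ≤ ‖P z‖ ^ 2 + ‖z - P z‖ ^ 2 := by
    have h := hPM 1 le_rfl (Matrix.of fun _ _ => z)
    simp only [StarAlgEquiv.norm_apply_fin_one, Matrix.add_apply, Matrix.mul_apply,
      Matrix.star_apply, Matrix.sub_apply, Matrix.map_apply, Matrix.of_apply,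
      Fin.sum_univ_one] at h
    calc ‖z‖ ^ 2 = ‖star (P z : B) * P z + star (z - P z : B) * (z - P z)‖ := h.symm
      _ ≤ ‖star (P z : B) * P z‖ + ‖star (z - P z : B) * (z - P z)‖ := norm_add_le _ _
      _ = ‖P z‖ ^ 2 + ‖z - P z‖ ^ 2 := by
        rw [CStarRing.norm_star_mul_self, CStarRing.norm_star_mul_self, ← sq, ← sq]; rfl
  refine LinearMap.eq_of_range_eq_of_norm_le (LinearMap.ext hP2) (LinearMap.ext hQ2)
    (SetLike.coe_injective ?_) hPsq hQc
  simpa only [LinearMap.coe_range] using hrange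

/-- Let `B` be a C*-algebra, `X ⊆ B` a closed linear subspace, `P : X → X` a
complete left `M`-projection (idempotent with `‖(Pₙx)*(Pₙx) + (x − Pₙx)*(x − Pₙx)‖ = ‖x‖²` for
every `n ≥ 1` and every `n × n` matrix `x` over `X`, where `Mₙ(B)` — with its unique C*-norm —
is modelled by a C*-algebra `Mat n` with a ⋆-algebra isomorphism `ι n` from the ⋆-algebra of
matrices over `B`), and `Q : X → X` a contractive linear idempotent with `range Q = range P`.
Then `Q = P`. -/
theorem stmt_8 {B : Type*} [NonUnitalCStarAlgebra B]
    (Mat : ℕ → Type*) [∀ n, NonUnitalCStarAlgebra (Mat n)]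
    (ι : ∀ n, Matrix (Fin n) (Fin n) B ≃⋆ₐ[ℂ] Mat n)
    (X : Submodule ℂ B) (hX : IsClosed (X : Set B))
    (P : X →ₗ[ℂ] X) (hP2 : ∀ x, P (P x) = P x)
    (hPM : ∀ n : ℕ, 1 ≤ n → ∀ x : Matrix (Fin n) (Fin n) X,
        ‖ι n (star (x.map fun v => ((P v : B))) * (x.map fun v => ((P v : B))) +
            star (x.map Subtype.val - x.map fun v => ((P v : B))) *
              (x.map Subtype.val - x.map fun v => ((P v : B))))‖
          = ‖ι n (x.map Subtype.val)‖ ^ 2)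
    (Q : X →ₗ[ℂ] X) (hQ2 : ∀ x, Q (Q x) = Q x)
    (hQc : ∀ x : X, ‖(Q x : B)‖ ≤ ‖(x : B)‖)
    (hrange : Set.range Q = Set.range P) :
    Q = P :=
  stmt_8_general Mat ι X P hP2 hPM Q hQ2 hQc hrange
end

section
/- Let B be a C*-algebra, X a closed linear subspace of B, and P : X → X a linear idempotent which is a left M-projection relative to the embedding, i.e., ‖(Px)*(Px) + (x − Px)*(x − Px)‖ = ‖x‖² for all x ∈ X. Then for every x ∈ X and every h in the range of P, ‖x − h‖ ≥ ‖x − P(x)‖. Consequently P(x) is a nearest point to x in the range of P, and the range of P is proximinal in X. -/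
/-! In a C⋆-algebra `0 ≤ d⋆d ≤ c⋆c + d⋆d`, so the left `M`-projection identity gives
`‖x - P x‖ ≤ ‖x‖`. Applying this to `x - P y` and using `P² = P` turns it into
`‖x - P x‖ ≤ ‖x - P y‖`. -/

lemma CStarRing.norm_sq_le_norm_star_mul_self_add {B : Type*} [NonUnitalCStarAlgebra B]
    (c d : B) : ‖d‖ ^ 2 ≤ ‖star c * c + star d * d‖ := by
  let _ := CStarAlgebra.spectralOrder B
  have := CStarAlgebra.spectralOrderedRing B
  rw [sq, ← CStarRing.norm_star_mul_self]
  exact CStarAlgebra.norm_le_norm_of_nonneg_of_le (star_mul_self_nonneg d)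
    (le_add_of_nonneg_left (star_mul_self_nonneg c))

lemma LinearMap.norm_sub_apply_le_norm_sub_of_mem_range {R E : Type*} [Semiring R]
    [SeminormedAddCommGroup E] [Module R E] (P : E →ₗ[R] E) (hP2 : ∀ x, P (P x) = P x)
    (hP : ∀ x, ‖x - P x‖ ≤ ‖x‖) (x : E) {h : E} (hh : h ∈ Set.range P) :
    ‖x - P x‖ ≤ ‖x - h‖ := by
  obtain ⟨y, rfl⟩ := hh
  have hcancel : x - P y - P (x - P y) = x - P x := by rw [map_sub, hP2]; abel
  simpa only [hcancel] using hP (x - P y)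

theorem stmt_9_general {B : Type*} [NonUnitalCStarAlgebra B]
    (X : Submodule ℂ B)
    (P : X →ₗ[ℂ] X) (hP2 : ∀ x, P (P x) = P x)
    (hPM : ∀ x : X,
      ‖star ((P x : B)) * (P x : B) + star ((x : B) - (P x : B)) * ((x : B) - (P x : B))‖
        = ‖(x : B)‖ ^ 2) :
    (∀ x : X, ∀ h ∈ Set.range P, ‖(x : B) - (P x : B)‖ ≤ ‖(x : B) - (h : B)‖) ∧
    (∀ x : X, ∃ h ∈ Set.range P, ∀ h' ∈ Set.range P,
      ‖(x : B) - (h : B)‖ ≤ ‖(x : B) - (h' : B)‖) := by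
  have hcontr : ∀ x : X, ‖x - P x‖ ≤ ‖x‖ := fun x => by
    rw [← sq_le_sq₀ (norm_nonneg _) (norm_nonneg _), Submodule.coe_norm, Submodule.coe_norm, Submodule.coe_sub, ← hPM x]
    exact CStarRing.norm_sq_le_norm_star_mul_self_add (P x : B) ((x : B) - (P x : B))
  have nearest : ∀ x : X, ∀ h ∈ Set.range P, ‖(x : B) - (P x : B)‖ ≤ ‖(x : B) - (h : B)‖ :=
    fun x h hh => by
      rw [← Submodule.coe_sub, ← Submodule.coe_sub, Submodule.norm_coe, Submodule.norm_coe]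
      exact P.norm_sub_apply_le_norm_sub_of_mem_range hP2 hcontr x hh
  exact ⟨nearest, fun x => ⟨P x, ⟨x, rfl⟩, nearest x⟩⟩

/-- Let `B` be a C*-algebra, `X ⊆ B` a closed linear subspace and `P : X → X`
a linear idempotent which is a left `M`-projection relative to the embedding, i.e.
`‖(Px)*(Px) + (x − Px)*(x − Px)‖ = ‖x‖²` for all `x ∈ X`.  Then for every `x ∈ X` and every `h`
in the range of `P`, `‖x − h‖ ≥ ‖x − P(x)‖`; consequently `P(x)` is a nearest point to `x` in the
range of `P`, and the range of `P` is proximinal in `X`. -/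
theorem stmt_9 {B : Type*} [NonUnitalCStarAlgebra B]
    (X : Submodule ℂ B) (hX : IsClosed (X : Set B))
    (P : X →ₗ[ℂ] X) (hP2 : ∀ x, P (P x) = P x)
    (hPM : ∀ x : X,
      ‖star ((P x : B)) * (P x : B) + star ((x : B) - (P x : B)) * ((x : B) - (P x : B))‖
        = ‖(x : B)‖ ^ 2) :
    (∀ x : X, ∀ h ∈ Set.range P, ‖(x : B) - (P x : B)‖ ≤ ‖(x : B) - (h : B)‖) ∧
    (∀ x : X, ∃ h ∈ Set.range P, ∀ h' ∈ Set.range P,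
      ‖(x : B) - (h : B)‖ ≤ ‖(x : B) - (h' : B)‖) :=
  stmt_9_general X P hP2 hPM
end

section
/- Let H be a complex Hilbert space and P : H → H a linear idempotent such that for every ξ ∈ H, the operator norm of the linear map T_ξ : ℂ² → H, T_ξ(s,t) = s·P(ξ) + t·(ξ − P(ξ)) (where ℂ² carries the Euclidean norm), equals ‖ξ‖. Then P = 0 or P = I. (This says the column Hilbert space H_c has no nontrivial right M-projections.) -/
/-- The linear map `ℂ² → H`, `(s, t) ↦ s·ξ + t·η`, bundled as a continuous linear map,
where `ℂ²` carries the Euclidean norm.  Its operator norm is the norm of the "row"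
`[ξ η]` in the row space `R₂(H_c)` over the column Hilbert space `H_c`. -/
noncomputable def rowPairMap {H : Type*} [NormedAddCommGroup H] [NormedSpace ℂ H]
    (ξ η : H) : EuclideanSpace ℂ (Fin 2) →L[ℂ] H :=
  LinearMap.toContinuousLinearMap
    { toFun := fun v => v 0 • ξ + v 1 • η
      map_add' := fun u v => by
        show (u 0 + v 0) • ξ + (u 1 + v 1) • η = _
        simp only [add_smul]; abel
      map_smul' := fun c v => by
        show (c * v 0) • ξ + (c * v 1) • η = _
        simp [mul_smul, smul_add] }

/-!
Let `x` lie in the range and `y` in the kernel of `P`. Since `(s, t) ↦ (s, c t)` is a unitary of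
`ℂ²` for `|c| = 1`, the hypothesis applied to `x + c y` gives `‖x + c y‖ = ‖rowPairMap x y‖` for
every unimodular `c`, so `x ⊥ y` by polarization. For orthogonal `x, y` the operator norm of
`rowPairMap x y` is at most `max ‖x‖ ‖y‖`, whereas `‖x + y‖² = ‖x‖² + ‖y‖²`; hence `x = 0` or
`y = 0`, i.e. the range or the kernel of `P` is trivial.
-/

section RowPairMap

variable {H : Type*} [NormedAddCommGroup H]

theorem rowPairMap_apply [NormedSpace ℂ H] (ξ η : H) (v : EuclideanSpace ℂ (Fin 2)) :
    rowPairMap ξ η v = v 0 • ξ + v 1 • η := rfl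

theorem norm_rowPairMap_smul_right_le [NormedSpace ℂ H] (ξ η : H) {c : ℂ} (hc : ‖c‖ = 1) :
    ‖rowPairMap ξ (c • η)‖ ≤ ‖rowPairMap ξ η‖ := by
  refine ContinuousLinearMap.opNorm_le_bound _ (norm_nonneg _) fun v => ?_
  let w : EuclideanSpace ℂ (Fin 2) := !₂[v 0, c * v 1]
  have hw : ‖w‖ = ‖v‖ := by
    simp [w, EuclideanSpace.norm_eq, Fin.sum_univ_two, hc]
  calc ‖rowPairMap ξ (c • η) v‖ = ‖rowPairMap ξ η w‖ := by
        rw [rowPairMap_apply, rowPairMap_apply, show w 0 = v 0 from rfl,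
          show w 1 = c * v 1 from rfl, mul_smul, smul_comm c]
    _ ≤ ‖rowPairMap ξ η‖ * ‖v‖ := hw ▸ (rowPairMap ξ η).le_opNorm w

theorem norm_rowPairMap_smul_right [NormedSpace ℂ H] (ξ η : H) {c : ℂ} (hc : ‖c‖ = 1) :
    ‖rowPairMap ξ (c • η)‖ = ‖rowPairMap ξ η‖ := by
  have hc₀ : c ≠ 0 := norm_ne_zero_iff.mp (hc ▸ one_ne_zero)
  refine le_antisymm (norm_rowPairMap_smul_right_le ξ η hc) ?_
  simpa [inv_smul_smul₀ hc₀] using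
    norm_rowPairMap_smul_right_le ξ (c • η) (c := c⁻¹) (by rw [norm_inv, hc, inv_one])

theorem norm_rowPairMap_le_max_of_inner_eq_zero [InnerProductSpace ℂ H] {x y : H}
    (hxy : inner ℂ x y = 0) : ‖rowPairMap x y‖ ≤ max ‖x‖ ‖y‖ := by
  set M := max ‖x‖ ‖y‖
  have hM : 0 ≤ M := le_max_of_le_left (norm_nonneg x)
  refine ContinuousLinearMap.opNorm_le_bound _ hM fun v => ?_
  have hv : ‖v‖ ^ 2 = ‖v 0‖ ^ 2 + ‖v 1‖ ^ 2 := by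
    rw [EuclideanSpace.norm_eq, Real.sq_sqrt (by positivity), Fin.sum_univ_two]
  have hTv : ‖rowPairMap x y v‖ ^ 2 = ‖v 0‖ ^ 2 * ‖x‖ ^ 2 + ‖v 1‖ ^ 2 * ‖y‖ ^ 2 := by
    rw [rowPairMap_apply, norm_add_sq (𝕜 := ℂ), inner_smul_left, inner_smul_right, hxy]
    simp [norm_smul, mul_pow]
  have hx : ‖x‖ ^ 2 ≤ M ^ 2 := pow_le_pow_left₀ (norm_nonneg x) (le_max_left _ _) 2
  have hy : ‖y‖ ^ 2 ≤ M ^ 2 := pow_le_pow_left₀ (norm_nonneg y) (le_max_right _ _) 2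
  refine pow_le_pow_iff_left₀ (norm_nonneg _) (by positivity) two_ne_zero |>.mp ?_
  rw [hTv, mul_pow, hv]
  nlinarith [sq_nonneg ‖v 0‖, sq_nonneg ‖v 1‖]

end RowPairMap

theorem inner_eq_zero_of_forall_norm_add_smul_eq {E : Type*} [NormedAddCommGroup E]
    [InnerProductSpace ℂ E] {x y : E} {N : ℝ} (h : ∀ c : ℂ, ‖c‖ = 1 → ‖x + c • y‖ = N) :
    inner ℂ x y = 0 := by
  have h₁ : ‖x + y‖ = N := by simpa using h 1 norm_one
  have h₂ : ‖x - y‖ = N := by simpa [sub_eq_add_neg] using h (-1) (by simp)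
  have h₃ : ‖x + Complex.I • y‖ = N := h Complex.I Complex.norm_I
  have h₄ : ‖x - Complex.I • y‖ = N := by
    simpa [sub_eq_add_neg] using h (-Complex.I) (by simp)
  rw [inner_eq_sum_norm_sq_div_four]
  simp [RCLike.I_to_complex, h₁, h₂, h₃, h₄]

theorem eq_zero_or_eq_zero_of_forall_norm_add_smul_eq_norm_rowPairMap {H : Type*}
    [NormedAddCommGroup H] [InnerProductSpace ℂ H] {x y : H}
    (h : ∀ c : ℂ, ‖c‖ = 1 → ‖x + c • y‖ = ‖rowPairMap x y‖) : x = 0 ∨ y = 0 := by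
  have hxy := inner_eq_zero_of_forall_norm_add_smul_eq h
  have hle : ‖x + y‖ ≤ max ‖x‖ ‖y‖ := by
    rw [← one_smul ℂ y, h 1 norm_one, one_smul]
    exact norm_rowPairMap_le_max_of_inner_eq_zero hxy
  have hpyth : ‖x + y‖ ^ 2 = ‖x‖ ^ 2 + ‖y‖ ^ 2 := by simpa [hxy] using norm_add_sq (𝕜 := ℂ) x y
  by_contra! hne
  have hx := norm_pos_iff.mpr hne.1
  have hy := norm_pos_iff.mpr hne.2
  have hsq := pow_le_pow_left₀ (norm_nonneg _) hle 2
  rcases le_total ‖x‖ ‖y‖ with hm | hm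
  · rw [max_eq_right hm] at hsq; nlinarith
  · rw [max_eq_left hm] at hsq; nlinarith

/-- Let `H` be a complex Hilbert space and `P : H → H` a linear idempotent
such that for every `ξ` the operator norm of `(s,t) ↦ s·P(ξ) + t·(ξ − P(ξ))` on Euclidean `ℂ²`
equals `‖ξ‖`.  Then `P = 0` or `P = I`: the column Hilbert space `H_c` has no nontrivial right
`M`-projections. -/
theorem stmt_12 {H : Type*} [NormedAddCommGroup H] [InnerProductSpace ℂ H]
    (P : H →ₗ[ℂ] H) (hP : ∀ ξ, P (P ξ) = P ξ)
    (h : ∀ ξ : H, ‖rowPairMap (P ξ) (ξ - P ξ)‖ = ‖ξ‖) :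
    P = 0 ∨ P = LinearMap.id := by
  have range_or_ker : ∀ ξ η, P ξ = 0 ∨ η - P η = 0 := fun ξ η => by
    refine eq_zero_or_eq_zero_of_forall_norm_add_smul_eq_norm_rowPairMap fun c hc => ?_
    have hPz : P (P ξ + c • (η - P η)) = P ξ := by simp [hP]
    have := h (P ξ + c • (η - P η))
    rw [hPz, add_sub_cancel_left, norm_rowPairMap_smul_right _ _ hc] at this
    exact this.symm
  by_cases h₀ : ∀ ξ, P ξ = 0
  · exact Or.inl (LinearMap.ext h₀)
  · obtain ⟨ξ, hξ⟩ := not_forall.mp h₀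
    exact Or.inr (LinearMap.ext fun η => sub_eq_zero.mp ((range_or_ker ξ η).resolve_left hξ)).symm
end

section
/- Let H be a complex Hilbert space and let d be a bounded linear operator on H with ‖d‖ ≤ 1. Then d is self-adjoint if and only if ‖1 + i·t·d‖ ≤ √(1 + t²) for every t ∈ ℝ, where 1 denotes the identity operator and i the imaginary unit. -/
/-!
Expanding the square, `‖x + i t d x‖² = ‖x‖² - 2t Im⟪x, d x⟫ + t² ‖d x‖²`, so the norm bound for
all `t` says that `t ↦ t² (‖x‖² - ‖d x‖²) + 2t Im⟪x, d x⟫` is nonnegative for every `x`. A quadratic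
without constant term is nonnegative only if its linear coefficient vanishes, and conversely
`‖d‖ ≤ 1` makes the leading coefficient nonnegative. On a complex space, `d` is self-adjoint
exactly when all the `⟪x, d x⟫` are real.
-/
open Complex InnerProductSpace

section

variable {H : Type*} [NormedAddCommGroup H] [InnerProductSpace ℂ H]

theorem norm_add_I_mul_ofReal_smul_sq (x y : H) (t : ℝ) :
    ‖x + (I * t) • y‖ ^ 2 = ‖x‖ ^ 2 - 2 * t * (⟪x, y⟫_ℂ).im + t ^ 2 * ‖y‖ ^ 2 := by
  have h : RCLike.re (I * t * ⟪x, y⟫_ℂ) = -(t * (⟪x, y⟫_ℂ).im) := by simp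
  rw [@norm_add_sq ℂ, inner_smul_right, norm_smul, h, mul_pow, norm_mul, norm_I, norm_real,
    Real.norm_eq_abs, one_mul, sq_abs]
  ring

theorem ContinuousLinearMap.isSelfAdjoint_iff_im_inner_self_apply_eq_zero [CompleteSpace H]
    {d : H →L[ℂ] H} : IsSelfAdjoint d ↔ ∀ x, (⟪x, d x⟫_ℂ).im = 0 := by
  rw [isSelfAdjoint_iff_isSymmetric, LinearMap.isSymmetric_iff_inner_map_self_real]
  refine forall_congr' fun x => ?_
  rw [conj_eq_iff_im, ← inner_conj_symm, conj_im, neg_eq_zero, coe_coe]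

end

theorem ContinuousLinearMap.opNorm_le_sqrt_iff {𝕜 E F : Type*} [NontriviallyNormedField 𝕜]
    [SeminormedAddCommGroup E] [SeminormedAddCommGroup F] [NormedSpace 𝕜 E] [NormedSpace 𝕜 F]
    {f : E →L[𝕜] F} {r : ℝ} (hr : 0 ≤ r) :
    ‖f‖ ≤ √r ↔ ∀ x, ‖f x‖ ^ 2 ≤ r * ‖x‖ ^ 2 := by
  rw [opNorm_le_iff (Real.sqrt_nonneg r)]
  refine forall_congr' fun x => ?_
  rw [← Real.sqrt_sq (norm_nonneg x), ← Real.sqrt_mul hr, Real.le_sqrt (norm_nonneg _) (by positivity),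
    Real.sqrt_sq (norm_nonneg x)]

theorem eq_zero_of_forall_mul_le_sq_mul {a c : ℝ} (h : ∀ t : ℝ, 2 * t * c ≤ t ^ 2 * a) : c = 0 := by
  have := discrim_le_zero (a := a) (b := -(2 * c)) (c := 0) fun t => by nlinarith [h t]
  rw [discrim] at this
  nlinarith [sq_nonneg c]

/-- For a bounded operator `d` on a complex Hilbert space `H` with `‖d‖ ≤ 1`,
`d` is self-adjoint iff `‖1 + i·t·d‖ ≤ √(1 + t²)` for every real `t`. -/
theorem stmt_14 {H : Type*} [NormedAddCommGroup H] [InnerProductSpace ℂ H] [CompleteSpace H]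
    (d : H →L[ℂ] H) (hd : ‖d‖ ≤ 1) :
    IsSelfAdjoint d ↔
      ∀ t : ℝ, ‖(1 : H →L[ℂ] H) + (Complex.I * (t : ℂ)) • d‖ ≤ Real.sqrt (1 + t ^ 2) := by
  have hnorm (t : ℝ) : ‖(1 : H →L[ℂ] H) + (I * (t : ℂ)) • d‖ ≤ √(1 + t ^ 2) ↔
      ∀ x, ‖x‖ ^ 2 - 2 * t * (⟪x, d x⟫_ℂ).im + t ^ 2 * ‖d x‖ ^ 2 ≤ (1 + t ^ 2) * ‖x‖ ^ 2 := by
    simp only [ContinuousLinearMap.opNorm_le_sqrt_iff (by positivity : 0 ≤ 1 + t ^ 2),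
      add_apply, one_apply_eq_self, smul_apply, norm_add_I_mul_ofReal_smul_sq]
  simp_rw [ContinuousLinearMap.isSelfAdjoint_iff_im_inner_self_apply_eq_zero, hnorm]
  constructor
  · intro him t x
    have hdx : ‖d x‖ ^ 2 ≤ ‖x‖ ^ 2 := by
      gcongr
      simpa using d.le_of_opNorm_le hd x
    rw [him x]
    linarith [mul_le_mul_of_nonneg_left hdx (sq_nonneg t)]
  · intro h x
    refine eq_zero_of_forall_mul_le_sq_mul (a := ‖x‖ ^ 2 - ‖d x‖ ^ 2) fun t => ?_
    linarith [h (-t) x]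
end

section
/- Let A be a unital complex Banach algebra (with ‖1‖ = 1) and let d ∈ A satisfy ‖1 + i·t·d‖ ≤ √(1 + t²) for every t ∈ ℝ. Then ‖exp(i·t·d)‖ = 1 for every t ∈ ℝ, i.e., d is a hermitian element of A. -/
/-!
Write `exp x = exp (x / n) ^ n`. Since `exp y = 1 + y + O(‖y‖²)`, a bound
`‖1 + x / n‖ ≤ 1 + O(1 / n²)` gives `‖exp (x / n)‖ ≤ 1 + O(1 / n²)`, hence
`‖exp x‖ ≤ (1 + O(1 / n²)) ^ n ≤ exp (O(1 / n)) → 1`. For `x = i t d` the hypothesis supplies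
this bound through `√(1 + s²) ≤ 1 + s² / 2`. Applying it to `±x` and using
`exp x * exp (-x) = 1` forces `‖exp x‖ = 1`.
-/

open NormedSpace Filter Topology

theorem Rat.norm_natCast (n : ℕ) : ‖(n : ℚ)‖ = n := by
  rw [← Rat.norm_cast_real, Rat.cast_natCast, Real.norm_natCast]

theorem norm_pow_le_exp_mul {R : Type*} [SeminormedRing R] {a : R} {s : ℝ} {n : ℕ} (hn : 0 < n)
    (ha : ‖a‖ ≤ 1 + s) : ‖a ^ n‖ ≤ Real.exp (n * s) := by
  calc ‖a ^ n‖ ≤ ‖a‖ ^ n := norm_pow_le' a hn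
    _ ≤ (1 + s) ^ n := by gcongr
    _ ≤ Real.exp s ^ n := by
      gcongr
      · exact (norm_nonneg a).trans ha
      · linarith [Real.add_one_le_exp s]
    _ = Real.exp (n * s) := (Real.exp_nat_mul s n).symm

section

variable {A : Type*} [NormedRing A] [NormedAlgebra ℚ A] [CompleteSpace A]

theorem norm_exp_sub_one_sub_le (x : A) : ‖exp x - 1 - x‖ ≤ Real.exp ‖x‖ - 1 - ‖x‖ := by
  have hA := (hasSum_nat_add_iff' 2).mpr (exp_series_hasSum_exp' (𝕂 := ℚ) x)
  have hR := (hasSum_nat_add_iff' 2).mpr (exp_series_hasSum_exp' (𝕂 := ℝ) ‖x‖)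
  simp only [Finset.sum_range_succ, Finset.sum_range_zero, ← Real.exp_eq_exp_ℝ] at hA hR
  norm_num at hA hR
  rw [sub_sub, sub_sub]
  refine hA.norm_le_of_bounded hR fun n => ?_
  rw [norm_smul, norm_inv, Rat.norm_natCast]
  gcongr
  exact norm_pow_le' x (by omega)

theorem norm_exp_le_norm_one_add_add_sq {y : A} (hy : ‖y‖ ≤ 1) :
    ‖exp y‖ ≤ ‖1 + y‖ + ‖y‖ ^ 2 := by
  have hrem : Real.exp ‖y‖ - 1 - ‖y‖ ≤ ‖y‖ ^ 2 :=
    (le_abs_self _).trans (Real.abs_exp_sub_one_sub_id_le (by rwa [abs_norm]))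
  calc ‖exp y‖ = ‖(1 + y) + (exp y - 1 - y)‖ := by congr 1; abel
    _ ≤ ‖1 + y‖ + ‖exp y - 1 - y‖ := norm_add_le _ _
    _ ≤ ‖1 + y‖ + ‖y‖ ^ 2 := by grw [norm_exp_sub_one_sub_le, hrem]

theorem norm_exp_le_one_of_norm_one_add_inv_smul_le {x : A} {C : ℝ}
    (h : ∀ᶠ n : ℕ in atTop, ‖1 + (n : ℚ)⁻¹ • x‖ ≤ 1 + C / n ^ 2) : ‖exp x‖ ≤ 1 := by
  set K := C + ‖x‖ ^ 2
  have hstep : ∀ᶠ n : ℕ in atTop, ‖exp x‖ ≤ Real.exp (K / n) := by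
    filter_upwards [h, eventually_gt_atTop 0, eventually_ge_atTop ⌈‖x‖⌉₊] with n hn hn0 hnx
    have hn0' : (0 : ℝ) < n := by exact_mod_cast hn0
    set y := (n : ℚ)⁻¹ • x
    have hy : ‖y‖ = ‖x‖ / n := by
      rw [norm_smul, norm_inv, Rat.norm_natCast, inv_mul_eq_div]
    have hy1 : ‖y‖ ≤ 1 := by
      rw [hy, div_le_one hn0']; exact Nat.ceil_le.mp hnx
    have hexp_y : ‖exp y‖ ≤ 1 + K / n ^ 2 := by
      calc ‖exp y‖ ≤ ‖1 + y‖ + ‖y‖ ^ 2 := norm_exp_le_norm_one_add_add_sq hy1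
        _ ≤ 1 + C / n ^ 2 + (‖x‖ / n) ^ 2 := by rw [← hy]; gcongr
        _ = 1 + K / n ^ 2 := by ring
    have hxy : exp x = exp y ^ n := by
      rw [← exp_nsmul, ← Nat.cast_smul_eq_nsmul ℚ, smul_smul, mul_inv_cancel₀ (by positivity),
        one_smul]
    calc ‖exp x‖ = ‖exp y ^ n‖ := by rw [hxy]
      _ ≤ Real.exp (n * (K / n ^ 2)) := norm_pow_le_exp_mul hn0 hexp_y
      _ = Real.exp (K / n) := by congr 1; field_simp
  have hlim : Tendsto (fun n : ℕ => Real.exp (K / n)) atTop (𝓝 1) := by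
    simpa [Function.comp_def] using
      (Real.continuous_exp.tendsto 0).comp (tendsto_const_div_atTop_nhds_zero_nat K)
  exact ge_of_tendsto hlim hstep

theorem norm_exp_eq_one_of_norm_exp_le_one [NormOneClass A] {x : A} (hx : ‖exp x‖ ≤ 1)
    (hnx : ‖exp (-x)‖ ≤ 1) : ‖exp x‖ = 1 := by
  have hmul : exp x * exp (-x) = 1 := by
    rw [← exp_add_of_commute (Commute.neg_right (Commute.refl x)), add_neg_cancel, exp_zero]
  refine le_antisymm hx ?_
  calc (1 : ℝ) = ‖exp x * exp (-x)‖ := by rw [hmul, norm_one]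
    _ ≤ ‖exp x‖ * ‖exp (-x)‖ := norm_mul_le _ _
    _ ≤ ‖exp x‖ := mul_le_of_le_one_right (norm_nonneg _) hnx

end

/-- Let `A` be a unital complex Banach algebra with `‖1‖ = 1` and `d ∈ A`
with `‖1 + i·t·d‖ ≤ √(1 + t²)` for every real `t`.  Then `‖exp(i·t·d)‖ = 1` for every real `t`,
i.e. `d` is a hermitian element of `A`. -/
theorem stmt_15 {A : Type*} [NormedRing A] [NormedAlgebra ℂ A] [CompleteSpace A] [NormOneClass A]
    (d : A) (h : ∀ t : ℝ, ‖1 + (Complex.I * (t : ℂ)) • d‖ ≤ Real.sqrt (1 + t ^ 2)) :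
    ∀ t : ℝ, ‖NormedSpace.exp ((Complex.I * (t : ℂ)) • d)‖ = 1 := by
  let _ : NormedAlgebra ℚ A := .restrictScalars ℚ ℂ A
  have hle : ∀ t : ℝ, ‖exp ((Complex.I * (t : ℂ)) • d)‖ ≤ 1 := fun t ↦
    norm_exp_le_one_of_norm_one_add_inv_smul_le (C := t ^ 2 / 2) <| .of_forall fun n ↦ by
      have hscale : (n : ℚ)⁻¹ • (Complex.I * (t : ℂ)) • d = (Complex.I * ((t / n : ℝ) : ℂ)) • d := by
        rw [← Rat.cast_smul_eq_qsmul ℂ, smul_smul]; push_cast; ring_nf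
      calc ‖1 + (n : ℚ)⁻¹ • (Complex.I * (t : ℂ)) • d‖ ≤ √(1 + (t / n) ^ 2) := hscale ▸ h (t / n)
        _ ≤ 1 + (t / n) ^ 2 / 2 := Real.sqrt_one_add_le (by linarith [sq_nonneg (t / n)])
        _ = 1 + t ^ 2 / 2 / n ^ 2 := by ring
  intro t
  refine norm_exp_eq_one_of_norm_exp_le_one (hle t) ?_
  simpa [neg_smul] using hle (-t)
end

section
/- Let A be a C*-algebra and E a right Hilbert C*-module over A. Let φ : E → E be an A-module map (φ(x·a) = φ(x)·a) with ‖φ(x)‖ ≤ ‖x‖ for all x ∈ E. Then for all x, y ∈ E, ‖⟪φ(x), φ(x)⟫ + ⟪y, y⟫‖ ≤ ‖⟪x, x⟫ + ⟪y, y⟫‖; that is, the column map τ_φ^c : (x,y) ↦ (φ(x), y) is contractive on the column space C₂(E). -/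
/-!
Put `a = ⟪x, x⟫` and, for `δ > 0`, let `z = g(a) • x` and `s = a^{1/2}` with `g(t) = √t / (t + δ)`.
Then `⟪z, z⟫ = t²/(t + δ)²` evaluated at `a`, so `‖z‖ ≤ 1`, and `x - s • z = x - a(a + δ)⁻¹ • x`
has inner product `t δ²/(t + δ)² ≤ δ/4` evaluated at `a`. Since `φ` is a contractive module map,
`⟪φ(s • z), φ(s • z)⟫ = s ⟪φ z, φ z⟫ s* ≤ s s* = a`, and letting `δ → 0` gives
`⟪φ x, φ x⟫ ≤ ⟪x, x⟫`. Adding `⟪y, y⟫` and using monotonicity of the norm on positive elements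
yields the estimate on the column space.
-/

open scoped RightActions

namespace CStarModule

variable {A E : Type*} [NonUnitalCStarAlgebra A] [PartialOrder A]
  [NormedAddCommGroup E] [Module ℂ E] [SMul A E] [CStarModule A E]

local notation "⟪" x ", " y "⟫" => inner A x y

lemma smul_smul (b c : A) (x : E) : b • c • x = (b * c) • x := by
  set d := b • c • x - (b * c) • x
  have hd : ⟪d, d⟫ = 0 := by
    simp only [d, inner_sub_right (x := d), inner_op_smul_right, mul_assoc, sub_self]
  exact sub_eq_zero.1 (inner_self.1 hd)

lemma inner_smul_self (b : A) (x : E) : ⟪b • x, b • x⟫ = b * ⟪x, x⟫ * star b := by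
  rw [inner_op_smul_left, inner_op_smul_right, mul_assoc]

lemma inner_cfcₙ_smul_self (h : ℝ → ℝ) (x : E)
    (hh : ContinuousOn h (quasispectrum ℝ ⟪x, x⟫) := by cfc_cont_tac)
    (h0 : h 0 = 0 := by cfc_zero_tac) :
    ⟪cfcₙ h ⟪x, x⟫ • x, cfcₙ h ⟪x, x⟫ • x⟫ = cfcₙ (fun t => h t * t * h t) ⟪x, x⟫ := by
  set a := ⟪x, x⟫
  rw [inner_smul_self, (cfcₙ_predicate h a).star_eq, cfcₙ_mul (fun t => h t * t) h a,
    cfcₙ_mul h (fun t => t) a, cfcₙ_id' ℝ a]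

lemma inner_sub_cfcₙ_smul_self (h : ℝ → ℝ) (x : E)
    (hh : ContinuousOn h (quasispectrum ℝ ⟪x, x⟫) := by cfc_cont_tac)
    (h0 : h 0 = 0 := by cfc_zero_tac) :
    ⟪x - cfcₙ h ⟪x, x⟫ • x, x - cfcₙ h ⟪x, x⟫ • x⟫ = cfcₙ (fun t => t * (1 - h t) ^ 2) ⟪x, x⟫ := by
  set a := ⟪x, x⟫
  have hexp : (fun t => t * (1 - h t) ^ 2) = fun t => t - t * h t - h t * t + h t * t * h t := by
    ext t; ring
  rw [hexp, cfcₙ_add (fun t => t - t * h t - h t * t) (fun t => h t * t * h t) a,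
    cfcₙ_sub (fun t => t - t * h t) (fun t => h t * t) a,
    cfcₙ_sub (fun t => t) (fun t => t * h t) a, cfcₙ_mul (fun t => h t * t) h a,
    cfcₙ_mul h (fun t => t) a, cfcₙ_mul (fun t => t) h a, cfcₙ_id' ℝ a]
  simp only [inner_sub_left, inner_sub_right, inner_op_smul_left, inner_op_smul_right,
    (cfcₙ_predicate h a).star_eq]
  noncomm_ring

variable [StarOrderedRing A]

lemma exists_mul_star_self_eq_inner_self_and_norm_sub_smul_lt (x : E) {ε : ℝ} (hε : 0 < ε) :
    ∃ (s : A) (z : E), s * star s = ⟪x, x⟫ ∧ ‖z‖ ≤ 1 ∧ ‖x - s • z‖ < ε := by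
  set a := ⟪x, x⟫
  have hσ : ∀ t ∈ quasispectrum ℝ a, 0 ≤ t := quasispectrum_nonneg_of_nonneg a inner_self_nonneg
  set δ := ε ^ 2
  have hδ : 0 < δ := by positivity
  set g : ℝ → ℝ := fun t => √t / (t + δ)
  have hδσ : ∀ t ∈ quasispectrum ℝ a, t + δ ≠ 0 := fun t ht => by linarith [hσ t ht]
  have hg : ContinuousOn g (quasispectrum ℝ a) :=
    Real.continuous_sqrt.continuousOn.div (by fun_prop) hδσ
  refine ⟨CFC.sqrt a, cfcₙ g a • x, ?_, ?_, ?_⟩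
  · rw [(CFC.sqrt_nonneg a).isSelfAdjoint.star_eq, CFC.sqrt_mul_sqrt_self a inner_self_nonneg]
  · have hz : ‖cfcₙ g a • x‖ ^ 2 ≤ 1 := by
      rw [norm_sq_eq A, inner_cfcₙ_smul_self g x]
      refine norm_cfcₙ_le fun t ht => ?_
      have ht := hσ t ht
      have hg2 : g t * t * g t = (t / (t + δ)) ^ 2 := by
        rw [show g t * t * g t = √t ^ 2 * t / (t + δ) ^ 2 by simp only [g]; field_simp,
          Real.sq_sqrt ht, div_pow, sq t]
      rw [hg2, Real.norm_of_nonneg (by positivity)]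
      exact pow_le_one₀ (by positivity) ((div_le_one (by positivity)).2 (by linarith))
    exact (pow_le_one_iff_of_nonneg (norm_nonneg _) two_ne_zero).1 hz
  · have hsg : CFC.sqrt a * cfcₙ g a = cfcₙ (fun t => t / (t + δ)) a := by
      rw [CFC.sqrt_eq_real_sqrt a inner_self_nonneg, ← cfcₙ_mul Real.sqrt g a]
      refine cfcₙ_congr fun t ht => ?_
      simp only [g]
      rw [← mul_div_assoc, Real.mul_self_sqrt (hσ t ht)]
    have hw : ‖x - cfcₙ (fun t => t / (t + δ)) a • x‖ ^ 2 < ε ^ 2 := by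
      rw [norm_sq_eq A, inner_sub_cfcₙ_smul_self (fun t => t / (t + δ)) x
        (continuousOn_id.div (by fun_prop) hδσ)]
      refine (norm_cfcₙ_le (c := δ / 4) fun t ht => ?_).trans_lt (by linarith)
      have ht := hσ t ht
      have hres : t * (1 - t / (t + δ)) ^ 2 = t * δ ^ 2 / (t + δ) ^ 2 := by
        field_simp
        ring
      rw [hres, Real.norm_of_nonneg (by positivity), div_le_iff₀ (by positivity)]
      nlinarith [sq_nonneg (t - δ)]
    rw [smul_smul, hsg]
    exact lt_of_pow_lt_pow_left₀ 2 hε.le hw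

lemma inner_map_smul_self_le {F : Type*} [FunLike F E E] (φ : F)
    (hmod : ∀ (b : A) (x : E), φ (b • x) = b • φ x) (hcontr : ∀ x, ‖φ x‖ ≤ ‖x‖)
    (b : A) {z : E} (hz : ‖z‖ ≤ 1) : ⟪φ (b • z), φ (b • z)⟫ ≤ b * star b := by
  have hφz : ‖⟪φ z, φ z⟫‖ ≤ 1 := by
    rw [← norm_sq_eq A]
    exact pow_le_one₀ (norm_nonneg _) ((hcontr z).trans hz)
  calc ⟪φ (b • z), φ (b • z)⟫ = b * ⟪φ z, φ z⟫ * star b := by rw [hmod, inner_smul_self]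
    _ ≤ ‖⟪φ z, φ z⟫‖ • (b * star b) := CStarAlgebra.star_right_conjugate_le_norm_smul
    _ ≤ b * star b := by
      simpa using smul_le_smul_of_nonneg_right hφz (mul_star_self_nonneg b)

theorem inner_map_self_le {F : Type*} [FunLike F E E] [AddMonoidHomClass F E E] (φ : F)
    (hmod : ∀ (b : A) (x : E), φ (b • x) = b • φ x) (hcontr : ∀ x, ‖φ x‖ ≤ ‖x‖) (x : E) :
    ⟪φ x, φ x⟫ ≤ ⟪x, x⟫ := by
  let _ : NormedSpace ℂ E := .ofCore (normedSpaceCore A)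
  have hφ : Continuous φ := AddMonoidHomClass.continuous_of_bound φ 1 (by simpa using hcontr)
  have hclosed : IsClosed {w : E | ⟪φ w, φ w⟫ ≤ ⟪x, x⟫} :=
    isClosed_le (continuous_inner.comp (hφ.prodMk hφ)) continuous_const
  refine hclosed.closure_subset (Metric.mem_closure_iff.2 fun ε hε => ?_)
  obtain ⟨s, z, hs, hz, hxw⟩ :=
    exists_mul_star_self_eq_inner_self_and_norm_sub_smul_lt (A := A) x hε
  exact ⟨s • z, hs ▸ inner_map_smul_self_le φ hmod hcontr s hz, by rwa [dist_eq_norm]⟩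

end CStarModule

theorem stmt_16_general {A E : Type*} [NonUnitalCStarAlgebra A] [PartialOrder A] [StarOrderedRing A]
    [NormedAddCommGroup E] [Module ℂ E] [SMul Aᵐᵒᵖ E] [CStarModule Aᵐᵒᵖ E]
    (φ : E →ₗ[ℂ] E)
    (hmod : ∀ (x : E) (a : A), φ (x <• a) = φ x <• a)
    (hcontr : ∀ x : E, ‖φ x‖ ≤ ‖x‖) :
    ∀ x y : E,
      ‖inner (𝕜 := Aᵐᵒᵖ) (φ x) (φ x) + inner (𝕜 := Aᵐᵒᵖ) y y‖ ≤
        ‖inner (𝕜 := Aᵐᵒᵖ) x x + inner (𝕜 := Aᵐᵒᵖ) y y‖ := by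
  intro x y
  have hφ := CStarModule.inner_map_self_le φ (fun (b : Aᵐᵒᵖ) x => hmod x b.unop) hcontr x
  exact CStarAlgebra.norm_le_norm_of_nonneg_of_le
    (add_nonneg CStarModule.inner_self_nonneg CStarModule.inner_self_nonneg)
    (add_le_add_left hφ _)

/-- Let `E` be a right Hilbert C*-module over a C*-algebra `A` and let
`φ : E → E` be a contractive `A`-module map.  Then for all `x, y ∈ E`,
`‖⟪φx, φx⟫ + ⟪y, y⟫‖ ≤ ‖⟪x, x⟫ + ⟪y, y⟫‖`; that is, the column map `(x,y) ↦ (φx, y)` is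
contractive on the column space `C₂(E)`. -/
theorem stmt_16 {A E : Type*} [NonUnitalCStarAlgebra A] [PartialOrder A] [StarOrderedRing A]
    [NormedAddCommGroup E] [Module ℂ E] [SMul Aᵐᵒᵖ E] [CStarModule Aᵐᵒᵖ E] [CompleteSpace E]
    (φ : E →ₗ[ℂ] E)
    (hmod : ∀ (x : E) (a : A), φ (x <• a) = φ x <• a)
    (hcontr : ∀ x : E, ‖φ x‖ ≤ ‖x‖) :
    ∀ x y : E,
      ‖inner (𝕜 := Aᵐᵒᵖ) (φ x) (φ x) + inner (𝕜 := Aᵐᵒᵖ) y y‖ ≤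
        ‖inner (𝕜 := Aᵐᵒᵖ) x x + inner (𝕜 := Aᵐᵒᵖ) y y‖ :=
  stmt_16_general φ hmod hcontr
end

section
/- Let A be a unital C*-algebra, let e ∈ A be a projection (e = e* = e²), and let c ∈ A satisfy ‖c*c + (1 − e)‖ ≤ 1. Then c·(1 − e) = 0. -/
/-! Since `c⋆c + (1 - e)` is positive of norm at most one, it is `≤ 1`, so `0 ≤ c⋆c ≤ e`.
A positive element dominated by a projection `e` is absorbed by it: `c⋆c * e = c⋆c`. Hence
`(c(1 - e))⋆ (c(1 - e)) = (1 - e) c⋆c (1 - e) = 0`, and the C⋆-identity gives `c(1 - e) = 0`. -/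

lemma IsStarProjection.mul_one_sub_eq_zero_of_star_mul_self_le {A : Type*} [CStarAlgebra A]
    [PartialOrder A] [StarOrderedRing A] {e c : A} (he : IsStarProjection e)
    (hc : star c * c ≤ e) : c * (1 - e) = 0 := by
  have habsorb : star c * c * e = star c * c :=
    (he.mul_right_and_mul_left_of_nonneg_of_le (star_mul_self_nonneg c) hc).1
  rw [← CStarRing.star_mul_self_eq_zero_iff, star_mul, he.one_sub.isSelfAdjoint.star_eq]
  calc (1 - e) * star c * (c * (1 - e)) = (1 - e) * (star c * c * (1 - e)) := by noncomm_ring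
    _ = 0 := by rw [mul_one_sub, habsorb, sub_self, mul_zero]

/-- In a unital C*-algebra `A`, if `e` is a projection (`e = e* = e²`)
and `c` satisfies `‖c*c + (1 - e)‖ ≤ 1`, then `c·(1 - e) = 0`. -/
theorem stmt_17 {A : Type*} [CStarAlgebra A] (e c : A)
    (he_star : star e = e) (he_idem : e * e = e)
    (hc : ‖star c * c + (1 - e)‖ ≤ 1) :
    c * (1 - e) = 0 := by
  let := CStarAlgebra.spectralOrder A
  have := CStarAlgebra.spectralOrderedRing A
  have he : IsStarProjection e := ⟨he_idem, he_star⟩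
  have hle : star c * c + (1 - e) ≤ 1 :=
    (CStarAlgebra.norm_le_one_iff_of_nonneg _
      (add_nonneg (star_mul_self_nonneg c) he.one_sub_nonneg)).mp hc
  refine he.mul_one_sub_eq_zero_of_star_mul_self_le ?_
  simpa using sub_le_sub_right hle (1 - e)
end
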